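/- arXiv:1803.01298 — 7 statements merged into one kernel-verified Lean document; each statement's English description precedes it below -/
import Mathlib

section
/- Let F = f + ψ where f : ℝⁿ → ℝ is differentiable at x and ψ : ℝⁿ → ℝ ∪ {+∞} is convex, proper, and closed, with x ∈ dom ψ. Let H be a symmetric n×n real matrix and define Q(d) = ∇f(x)ᵀd + (1/2)dᵀHd + ψ(x+d) − ψ(x). If Q is a convex function of d and Q(d) < 0 for some d, then d is a descent direction for F at x: there exists ᾱ > 0 such that F(x + αd) < F(x) for all α ∈ (0, ᾱ]. -/
/-
Setting: minimize F = f + ψ over ℝⁿ (modeled as `EuclideanSpace ℝ (Fin n)`), where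
f : ℝⁿ → ℝ is smooth and ψ : ℝⁿ → ℝ ∪ {+∞} (modeled as `EReal`-valued, never ⊥)
is convex, proper and closed.  The quadratic model at x with symmetric operator H is
Q(d) = ⟪∇f(x), d⟫ + (1/2)⟪H d, d⟫ + ψ(x+d) − ψ(x), and Δ(d) = ⟪∇f(x), d⟫ + ψ(x+d) − ψ(x).
-/

open scoped RealInnerProductSpace
open Set Filter Topology

noncomputable section

/-- Convexity for extended-real-valued functions (values in ℝ ∪ {±∞}). -/
def ConvexE {n : ℕ} (g : EuclideanSpace ℝ (Fin n) → EReal) : Prop :=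
  ∀ x y : EuclideanSpace ℝ (Fin n), ∀ a b : ℝ, 0 ≤ a → 0 ≤ b → a + b = 1 →
    g (a • x + b • y) ≤ (a : EReal) * g x + (b : EReal) * g y

/-- ψ is proper: it never takes the value −∞ (its values lie in ℝ ∪ {+∞})
and it is finite somewhere. -/
def ProperPsi {n : ℕ} (ψ : EuclideanSpace ℝ (Fin n) → EReal) : Prop :=
  (∀ x, ψ x ≠ ⊥) ∧ ∃ x, ψ x ≠ ⊤

/-- ψ is closed, i.e. lower semicontinuous. -/
def ClosedPsi {n : ℕ} (ψ : EuclideanSpace ℝ (Fin n) → EReal) : Prop :=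
  LowerSemicontinuous ψ

/-- H is a symmetric (self-adjoint) linear operator. -/
def SymmCLM {n : ℕ} (H : EuclideanSpace ℝ (Fin n) →L[ℝ] EuclideanSpace ℝ (Fin n)) : Prop :=
  ∀ u v, ⟪H u, v⟫ = ⟪u, H v⟫

/-- m is the smallest eigenvalue of the symmetric operator H
(characterized as the minimum of the Rayleigh quotient over the unit sphere). -/
def IsSmallestEigenvalue {n : ℕ} (H : EuclideanSpace ℝ (Fin n) →L[ℝ] EuclideanSpace ℝ (Fin n))
    (m : ℝ) : Prop :=
  IsLeast {r : ℝ | ∃ u : EuclideanSpace ℝ (Fin n), ‖u‖ = 1 ∧ r = ⟪H u, u⟫} m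

/-- The objective F = f + ψ (extended-real-valued). -/
def Fm {n : ℕ} (f : EuclideanSpace ℝ (Fin n) → ℝ) (ψ : EuclideanSpace ℝ (Fin n) → EReal)
    (x : EuclideanSpace ℝ (Fin n)) : EReal :=
  (f x : EReal) + ψ x

/-- The quadratic model Q(d) = ∇f(x)ᵀd + (1/2)dᵀHd + ψ(x+d) − ψ(x). -/
def Qm {n : ℕ} (f : EuclideanSpace ℝ (Fin n) → ℝ) (ψ : EuclideanSpace ℝ (Fin n) → EReal)
    (H : EuclideanSpace ℝ (Fin n) →L[ℝ] EuclideanSpace ℝ (Fin n))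
    (x d : EuclideanSpace ℝ (Fin n)) : EReal :=
  ((⟪gradient f x, d⟫ + 1 / 2 * ⟪H d, d⟫ : ℝ) : EReal) + ψ (x + d) - ψ x

/-- Δ(d) = ∇f(x)ᵀd + ψ(x+d) − ψ(x). -/
def Dm {n : ℕ} (f : EuclideanSpace ℝ (Fin n) → ℝ) (ψ : EuclideanSpace ℝ (Fin n) → EReal)
    (x d : EuclideanSpace ℝ (Fin n)) : EReal :=
  ((⟪gradient f x, d⟫ : ℝ) : EReal) + ψ (x + d) - ψ x

/-- g is σ-strongly convex: g − (σ/2)‖·‖² is convex. -/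
def StrongConvexE {n : ℕ} (σ : ℝ) (g : EuclideanSpace ℝ (Fin n) → EReal) : Prop :=
  ConvexE (fun d => g d - ((σ / 2 * ‖d‖ ^ 2 : ℝ) : EReal))

/-- The solution set Ω = argmin F. -/
def SolSet {n : ℕ} (f : EuclideanSpace ℝ (Fin n) → ℝ)
    (ψ : EuclideanSpace ℝ (Fin n) → EReal) : Set (EuclideanSpace ℝ (Fin n)) :=
  {y | ∀ z, Fm f ψ y ≤ Fm f ψ z}

/-
Convexity of Q together with Q(0) = 0 gives Q(αd) ≤ α Q(d) for α ∈ (0, 1]. Since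
F(x + αd) − F(x) = Q(αd) + (f(x + αd) − f(x) − α⟪∇f(x), d⟫) − (α²/2)⟪Hd, d⟫
and the last two terms are o(α), F(x + αd) − F(x) ≤ α Q(d) + o(α) < 0 for small α > 0.
-/

theorem EReal.le_coe_of_coe_add_sub_coe_le {a p b : ℝ} {y : EReal}
    (h : (a : EReal) + y - p ≤ b) : y ≤ ((b - a + p : ℝ) : EReal) := by
  induction y using EReal.rec with
  | bot => exact bot_le
  | top => simp at h
  | coe y =>
    norm_cast at h ⊢
    linarith

theorem ConvexE.le_smul_of_map_zero {n : ℕ} {g : EuclideanSpace ℝ (Fin n) → EReal}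
    (hg : ConvexE g) (hg0 : g 0 = 0) (d : EuclideanSpace ℝ (Fin n)) {α : ℝ}
    (hα₀ : 0 ≤ α) (hα₁ : α ≤ 1) : g (α • d) ≤ α * g d := by
  simpa [hg0] using hg d 0 α (1 - α) hα₀ (by linarith) (by ring)

theorem HasDerivAt.isLittleO_sub_quadratic {g : ℝ → ℝ} {c : ℝ} (hg : HasDerivAt g c 0)
    (b : ℝ) : (fun α => g α - g 0 - (α * c + α ^ 2 * b)) =o[𝓝 0] fun α => α := by
  have hquad := (Asymptotics.isLittleO_pow_id (𝕜 := ℝ) one_lt_two).const_mul_left b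
  have hlin := hg.isLittleO
  simp only [sub_zero, smul_eq_mul] at hlin
  refine (hlin.sub hquad).congr_left fun α => ?_
  ring

theorem eventually_add_mul_neg_of_isLittleO {u : ℝ → ℝ} (hu : u =o[𝓝 0] fun α => α)
    {q : ℝ} (hq : q < 0) : ∀ᶠ α in 𝓝[>] 0, u α + α * q < 0 := by
  have hbound := hu.bound (by linarith : 0 < -q / 2)
  filter_upwards [nhdsWithin_le_nhds hbound, self_mem_nhdsWithin] with α hα (hα₀ : 0 < α)
  rw [Real.norm_eq_abs, Real.norm_eq_abs, abs_of_pos hα₀] at hα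
  nlinarith [le_abs_self (u α)]

theorem DifferentiableAt.hasDerivAt_comp_add_smul {E : Type*} [NormedAddCommGroup E]
    [InnerProductSpace ℝ E] [CompleteSpace E] {f : E → ℝ} {x : E}
    (hf : DifferentiableAt ℝ f x) (d : E) :
    HasDerivAt (fun α : ℝ => f (x + α • d)) ⟪gradient f x, d⟫ 0 := by
  have hline : HasDerivAt (fun α : ℝ => x + α • d) d 0 := by
    simpa using ((hasDerivAt_id (0 : ℝ)).smul_const d).const_add x
  have hgrad :
      HasFDerivAt f (InnerProductSpace.toDual ℝ E (gradient f x)) (x + (0 : ℝ) • d) := by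
    simpa using hf.hasGradientAt.hasFDerivAt
  exact hgrad.comp_hasDerivAt (0 : ℝ) hline

section QuadraticModel

variable {n : ℕ} {f : EuclideanSpace ℝ (Fin n) → ℝ} {ψ : EuclideanSpace ℝ (Fin n) → EReal}
  {H : EuclideanSpace ℝ (Fin n) →L[ℝ] EuclideanSpace ℝ (Fin n)} {x : EuclideanSpace ℝ (Fin n)}
  {p : ℝ}

theorem Qm_zero (hp : ψ x = p) : Qm f ψ H x 0 = 0 := by
  simp [Qm, hp]

theorem Fm_add_le_of_Qm_le (hp : ψ x = p) {d : EuclideanSpace ℝ (Fin n)} {t : ℝ}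
    (hQ : Qm f ψ H x d ≤ t) :
    Fm f ψ (x + d) ≤
      ((f (x + d) + (t - (⟪gradient f x, d⟫ + 1 / 2 * ⟪H d, d⟫) + p) : ℝ) : EReal) := by
  rw [Qm, hp] at hQ
  rw [Fm, EReal.coe_add]
  exact add_le_add_right (EReal.le_coe_of_coe_add_sub_coe_le hQ) _

end QuadraticModel

theorem descent_direction_of_Q_neg_general {n : ℕ}
    (f : EuclideanSpace ℝ (Fin n) → ℝ) (ψ : EuclideanSpace ℝ (Fin n) → EReal)
    (H : EuclideanSpace ℝ (Fin n) →L[ℝ] EuclideanSpace ℝ (Fin n))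
    (x d : EuclideanSpace ℝ (Fin n))
    (hf : DifferentiableAt ℝ f x)
    (hψproper : ProperPsi ψ)
    (hdom : ψ x ≠ ⊤)
    (hQconv : ConvexE (Qm f ψ H x))
    (hQd : Qm f ψ H x d < 0) :
    ∃ ᾱ : ℝ, 0 < ᾱ ∧ ∀ α ∈ Set.Ioc (0 : ℝ) ᾱ, Fm f ψ (x + α • d) < Fm f ψ x := by
  obtain ⟨p, hp⟩ : ∃ p : ℝ, ψ x = p := ⟨_, (EReal.coe_toReal hdom (hψproper.1 x)).symm⟩
  obtain ⟨q, hQq, hq⟩ := EReal.lt_iff_exists_real_btwn.1 hQd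
  have hdecrease := eventually_add_mul_neg_of_isLittleO
    ((hf.hasDerivAt_comp_add_smul d).isLittleO_sub_quadratic (⟪H d, d⟫ / 2))
    (EReal.coe_lt_coe_iff.1 hq)
  obtain ⟨ᾱ, hᾱ, hsub⟩ :=
    mem_nhdsGT_iff_exists_Ioc_subset.1 (hdecrease.and (Ioc_mem_nhdsGT one_pos))
  refine ⟨ᾱ, hᾱ, fun α hα => ?_⟩
  obtain ⟨hlt, hα₀, hα₁⟩ := hsub hα
  have hQα : Qm f ψ H x (α • d) ≤ ((α * q : ℝ) : EReal) := calc
    _ ≤ α * Qm f ψ H x d := hQconv.le_smul_of_map_zero (Qm_zero hp) d hα₀.le hα₁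
    _ ≤ α * q := mul_le_mul_of_nonneg_left hQq.le (EReal.coe_nonneg.2 hα₀.le)
  calc Fm f ψ (x + α • d) ≤ _ := Fm_add_le_of_Qm_le hp hQα
    _ < ((f x + p : ℝ) : EReal) := by
      rw [zero_smul, add_zero] at hlt
      rw [map_smul, inner_smul_left, inner_smul_right, inner_smul_right, conj_trivial]
      exact EReal.coe_lt_coe_iff.2 (by linarith)
    _ = Fm f ψ x := by rw [Fm, hp, EReal.coe_add]

/-- If the quadratic model Q is convex and Q(d) < 0, then d is a descent
direction for F = f + ψ at x: there is ᾱ > 0 with F(x + αd) < F(x) for all α ∈ (0, ᾱ]. -/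
theorem descent_direction_of_Q_neg {n : ℕ}
    (f : EuclideanSpace ℝ (Fin n) → ℝ) (ψ : EuclideanSpace ℝ (Fin n) → EReal)
    (H : EuclideanSpace ℝ (Fin n) →L[ℝ] EuclideanSpace ℝ (Fin n))
    (x d : EuclideanSpace ℝ (Fin n))
    (hf : DifferentiableAt ℝ f x) (hH : SymmCLM H)
    (hψconv : ConvexE ψ) (hψproper : ProperPsi ψ) (hψclosed : ClosedPsi ψ)
    (hdom : ψ x ≠ ⊤)
    (hQconv : ConvexE (Qm f ψ H x))
    (hQd : Qm f ψ H x d < 0) :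
    ∃ ᾱ : ℝ, 0 < ᾱ ∧ ∀ α ∈ Set.Ioc (0 : ℝ) ᾱ, Fm f ψ (x + α • d) < Fm f ψ x :=
  descent_direction_of_Q_neg_general f ψ H x d hf hψproper hdom hQconv hQd
end
end

section
/- Let Q(d) = ∇f(x)ᵀd + (1/2)dᵀHd + ψ(x+d) − ψ(x) be σ-strongly convex for some σ > 0, with Q* = inf_d Q(d) > −∞, and let m ∈ ℝ be such that dᵀHd ≥ m‖d‖² for all d (e.g., m the smallest eigenvalue of H). If d satisfies the inexactness condition Q(d) ≤ (1 − η)Q* for some η ∈ [0, 1), then Δ = ∇f(x)ᵀd + ψ(x+d) − ψ(x) satisfies Δ ≤ −(1/2)( ((1 − √η)/(1 + √η))·σ·‖d‖² + dᵀHd ) ≤ −(1/2)( ((1 − √η)/(1 + √η))·σ + m )·‖d‖². -/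
/-
Setting: minimize F = f + ψ over ℝⁿ (modeled as `EuclideanSpace ℝ (Fin n)`), where
f : ℝⁿ → ℝ is smooth and ψ : ℝⁿ → ℝ ∪ {+∞} (modeled as `EReal`-valued, never ⊥)
is convex, proper and closed.  The quadratic model at x with symmetric operator H is
Q(d) = ⟪∇f(x), d⟫ + (1/2)⟪H d, d⟫ + ψ(x+d) − ψ(x), and Δ(d) = ⟪∇f(x), d⟫ + ψ(x+d) − ψ(x).
-/

open scoped RealInnerProductSpace
open Set Filter Topology

noncomputable section

/-- Auxiliary real-arithmetic lemma for the inexactness bound. -/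
lemma key_real_aux (q qs σ r η : ℝ) (hσ : 0 < σ) (hr : 0 ≤ r) (hη0 : 0 ≤ η) (hη1 : η < 1)
    (h1 : q ≤ (1 - η) * qs)
    (h2 : ∀ t : ℝ, 0 < t → t < 1 → qs ≤ t * q - σ / 2 * t * (1 - t) * r) :
    q ≤ -(1 / 2) * ((1 - Real.sqrt η) / (1 + Real.sqrt η) * σ * r) := by
  set s := Real.sqrt η with hs
  have hs0 : 0 ≤ s := Real.sqrt_nonneg _
  have hs1 : s < 1 := by
    rw [hs, show (1:ℝ) = Real.sqrt 1 by simp]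
    exact Real.sqrt_lt_sqrt hη0 hη1
  have hsq : s ^ 2 = η := Real.sq_sqrt hη0
  have hu : (0:ℝ) < 1 + s := by linarith
  rcases eq_or_lt_of_le hs0 with h | h
  · -- s = 0
    have hη : η = 0 := by rw [← hsq, ← h]; norm_num
    have h1' : q ≤ qs := by rw [hη] at h1; simpa using h1
    have hkey : ∀ t : ℝ, 0 < t → t < 1 → q ≤ -(σ/2) * t * r := by
      intro t ht0 ht1
      have h3 := h2 t ht0 ht1
      have h4 : (1 - t) * q ≤ -(σ/2) * t * ((1-t) * r) := by nlinarith
      have h5 : (1-t) * (q + σ/2 * t * r) ≤ 0 := by nlinarith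
      have h6 : q + σ/2 * t * r ≤ 0 :=
        nonpos_of_mul_nonpos_right (by linarith [mul_comm (1-t) (q + σ/2*t*r)]) (sub_pos.2 ht1)
      linarith
    have hfin : q ≤ -(σ/2) * r := by
      apply le_of_forall_pos_le_add
      intro ε hε
      rcases eq_or_lt_of_le hr with hr0 | hr0
      · have := hkey (1/2) (by norm_num) (by norm_num)
        rw [← hr0] at this ⊢; nlinarith
      · set t : ℝ := max (1/2) (1 - ε/(σ*r)) with ht
        have ht0 : 0 < t := lt_of_lt_of_le (by norm_num) (le_max_left _ _)
        have ht1 : t < 1 := by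
          apply max_lt (by norm_num)
          have : 0 < ε/(σ*r) := div_pos hε (mul_pos hσ hr0)
          linarith
        have := hkey t ht0 ht1
        have h1t : 1 - t ≤ ε/(σ*r) := by
          have := le_max_right (1/2 : ℝ) (1 - ε/(σ*r)); rw [← ht] at this; linarith
        have hmul : σ*r*(1-t) ≤ σ*r*(ε/(σ*r)) :=
          mul_le_mul_of_nonneg_left h1t (mul_pos hσ hr0).le
        have heq : σ*r*(ε/(σ*r)) = ε := by field_simp
        rw [heq] at hmul
        linarith
    rw [← h]
    calc q ≤ -(σ/2) * r := hfin
    _ = -(1/2) * ((1 - 0)/(1 + 0) * σ * r) := by ring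
  · -- s > 0
    have e1 : (1:ℝ)/(1+s) * q - σ/2 * ((1:ℝ)/(1+s)) * (1 - (1:ℝ)/(1+s)) * r
        = ((1+s)*q - σ/2*s*r)/(1+s)^2 := by field_simp; ring
    have h3 := h2 (1/(1+s)) (by positivity) (by rw [div_lt_one hu]; linarith)
    rw [e1, le_div_iff₀ (by positivity)] at h3
    have A := mul_le_mul_of_nonneg_left h1 hu.le
    rw [← hsq] at A
    have B := mul_le_mul_of_nonneg_left h3 (by linarith : (0:ℝ) ≤ 1 - s)
    have C : s * ((1+s)*q) ≤ s * (-(1/2)*(1-s)*σ*r) := by nlinarith [A, B]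
    have D : (1+s)*q ≤ -(1/2)*(1-s)*σ*r := le_of_mul_le_mul_left C h
    rw [show -(1/2) * ((1-s)/(1+s)*σ*r) = (-(1/2)*(1-s)*σ*r)/(1+s) by ring]
    rw [le_div_iff₀ hu]
    linarith

/-- If the quadratic model value is not `⊤`, then `ψ` is finite at the shifted point. -/
lemma psi_ne_top_aux {n : ℕ} (f : EuclideanSpace ℝ (Fin n) → ℝ)
    (ψ : EuclideanSpace ℝ (Fin n) → EReal)
    (H : EuclideanSpace ℝ (Fin n) →L[ℝ] EuclideanSpace ℝ (Fin n))
    (x e : EuclideanSpace ℝ (Fin n)) (a : ℝ) (ha : ψ x = (a : EReal))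
    (h : Qm f ψ H x e ≠ ⊤) : ψ (x + e) ≠ ⊤ := by
  intro h'
  apply h
  rw [Qm, h', ha, EReal.coe_add_top, EReal.top_sub_coe]

/-- If Q is σ-strongly convex with Q* = inf Q > −∞, dᵀHd ≥ m‖d‖² for all d,
and d satisfies Q(d) ≤ (1 − η)Q* for some η ∈ [0,1), then
Δ ≤ −(1/2)( ((1−√η)/(1+√η))σ‖d‖² + dᵀHd ) ≤ −(1/2)( ((1−√η)/(1+√η))σ + m )‖d‖². -/
theorem Delta_bound_of_inexact {n : ℕ}
    (f : EuclideanSpace ℝ (Fin n) → ℝ) (ψ : EuclideanSpace ℝ (Fin n) → EReal)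
    (H : EuclideanSpace ℝ (Fin n) →L[ℝ] EuclideanSpace ℝ (Fin n))
    (x d : EuclideanSpace ℝ (Fin n)) (σ m η : ℝ)
    (hf : DifferentiableAt ℝ f x) (hH : SymmCLM H)
    (hψconv : ConvexE ψ) (hψproper : ProperPsi ψ) (hψclosed : ClosedPsi ψ)
    (hdom : ψ x ≠ ⊤)
    (hσ : 0 < σ) (hsc : StrongConvexE σ (Qm f ψ H x))
    (hQstar : (⨅ e, Qm f ψ H x e) ≠ ⊥)
    (hm : ∀ e : EuclideanSpace ℝ (Fin n), m * ‖e‖ ^ 2 ≤ ⟪H e, e⟫)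
    (hη0 : 0 ≤ η) (hη1 : η < 1)
    (happrox : Qm f ψ H x d ≤ ((1 - η : ℝ) : EReal) * ⨅ e, Qm f ψ H x e) :
    Dm f ψ x d ≤
        ((-(1 / 2) * ((1 - Real.sqrt η) / (1 + Real.sqrt η) * σ * ‖d‖ ^ 2 + ⟪H d, d⟫) : ℝ) :
          EReal) ∧
      -(1 / 2) * ((1 - Real.sqrt η) / (1 + Real.sqrt η) * σ * ‖d‖ ^ 2 + ⟪H d, d⟫) ≤
        -(1 / 2) * ((1 - Real.sqrt η) / (1 + Real.sqrt η) * σ + m) * ‖d‖ ^ 2 := by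
  set a : ℝ := (ψ x).toReal with hadef
  have ha : ψ x = (a : EReal) := (EReal.coe_toReal hdom (hψproper.1 x)).symm
  have hQ0 : Qm f ψ H x 0 = 0 := by
    simp [Qm, ha, ← EReal.coe_sub]
  set Qs : EReal := ⨅ e, Qm f ψ H x e with hQsdef
  have hQs_le : ∀ e, Qs ≤ Qm f ψ H x e := fun e => iInf_le _ e
  have hQs0 : Qs ≤ 0 := le_of_le_of_eq (hQs_le 0) hQ0
  have hQsT : Qs ≠ ⊤ := ne_top_of_le_ne_top (by simp) hQs0
  set qs : ℝ := Qs.toReal with hqsdef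
  have hqs : Qs = (qs : EReal) := (EReal.coe_toReal hQsT hQstar).symm
  have hrw : ((1 - η : ℝ) : EReal) * Qs = (((1 - η) * qs : ℝ) : EReal) := by
    rw [hqs, ← EReal.coe_mul]
  have hQd_le : Qm f ψ H x d ≤ (((1 - η) * qs : ℝ) : EReal) := by
    rw [← hrw]; exact happrox
  have hbT : ψ (x + d) ≠ ⊤ :=
    psi_ne_top_aux f ψ H x d a ha (ne_top_of_le_ne_top (EReal.coe_ne_top _) hQd_le)
  set b : ℝ := (ψ (x + d)).toReal with hbdef
  have hb : ψ (x + d) = (b : EReal) := (EReal.coe_toReal hbT (hψproper.1 _)).symm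
  have hQd : Qm f ψ H x d
      = ((⟪gradient f x, d⟫ + 1 / 2 * ⟪H d, d⟫ + b - a : ℝ) : EReal) := by
    rw [Qm, ha, hb, ← EReal.coe_add, ← EReal.coe_sub]
  set q : ℝ := ⟪gradient f x, d⟫ + 1 / 2 * ⟪H d, d⟫ + b - a with hqdef
  have hq1 : q ≤ (1 - η) * qs := by
    rw [hQd] at hQd_le; exact_mod_cast hQd_le
  set r : ℝ := ‖d‖ ^ 2 with hrdef
  have h2 : ∀ t : ℝ, 0 < t → t < 1 → qs ≤ t * q - σ / 2 * t * (1 - t) * r := by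
    intro t ht0 ht1
    have hco := hsc d 0 t (1 - t) ht0.le (by linarith) (by ring)
    simp only [smul_zero, add_zero] at hco
    rw [hQd, hQ0, ← EReal.coe_sub] at hco
    have e0 : (0 : EReal) - ((σ / 2 * ‖(0 : EuclideanSpace ℝ (Fin n))‖ ^ 2 : ℝ) : EReal) = 0 := by
      norm_num
    rw [e0, mul_zero, add_zero, ← EReal.coe_mul] at hco
    have hTt : Qm f ψ H x (t • d) ≠ ⊤ := by
      intro h'
      rw [h', EReal.top_sub_coe] at hco
      exact EReal.coe_ne_top _ (top_le_iff.1 hco)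
    have hbtT : ψ (x + t • d) ≠ ⊤ := psi_ne_top_aux f ψ H x (t • d) a ha hTt
    set bt : ℝ := (ψ (x + t • d)).toReal with hbtdef
    have hbt : ψ (x + t • d) = (bt : EReal) := (EReal.coe_toReal hbtT (hψproper.1 _)).symm
    have hQt : Qm f ψ H x (t • d)
        = ((⟪gradient f x, t • d⟫ + 1 / 2 * ⟪H (t • d), t • d⟫ + bt - a : ℝ) : EReal) := by
      rw [Qm, ha, hbt, ← EReal.coe_add, ← EReal.coe_sub]
    rw [hQt, ← EReal.coe_sub] at hco
    have hco' := EReal.coe_le_coe_iff.1 hco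
    have hlow : qs ≤ ⟪gradient f x, t • d⟫ + 1 / 2 * ⟪H (t • d), t • d⟫ + bt - a := by
      have := hQs_le (t • d)
      rw [hqs, hQt] at this
      exact_mod_cast this
    have hnt : ‖t • d‖ ^ 2 = t ^ 2 * r := by
      rw [norm_smul, Real.norm_eq_abs, abs_of_pos ht0, mul_pow]
    rw [hnt, ← hrdef] at hco'
    linarith [hco', hlow]
  have hkeyq : q ≤ -(1 / 2) * ((1 - Real.sqrt η) / (1 + Real.sqrt η) * σ * r) :=
    key_real_aux q qs σ r η hσ (by rw [hrdef]; positivity) hη0 hη1 hq1 h2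
  have hDm : Dm f ψ x d = ((⟪gradient f x, d⟫ + b - a : ℝ) : EReal) := by
    rw [Dm, ha, hb, ← EReal.coe_add, ← EReal.coe_sub]
  constructor
  · rw [hDm, EReal.coe_le_coe_iff]
    have hqd : q = ⟪gradient f x, d⟫ + 1 / 2 * ⟪H d, d⟫ + b - a := hqdef
    linarith [hkeyq]
  · have hmd := hm d
    rw [← hrdef] at hmd
    linarith [hmd]
end
end

section
/- Let f : ℝⁿ → ℝ be differentiable with L-Lipschitz-continuous gradient (L > 0), ψ : ℝⁿ → ℝ ∪ {+∞} convex, proper, and closed, F = f + ψ, and Q(d) = ∇f(x)ᵀd + (1/2)dᵀHd + ψ(x+d) − ψ(x) σ-strongly convex for some σ > 0. Let m be the smallest eigenvalue of the symmetric matrix H and suppose (1 − √η)σ + (1 + √η)m > 0 for some η ∈ [0,1). If d satisfies Q(d) ≤ (1 − η)Q*, and γ ∈ (0,1), then for every step size α with 0 < α ≤ min{1, (1 − γ)·((1 − √η)σ + (1 + √η)m)/(L(1 + √η))}, the Armijo sufficient-decrease condition F(x + αd) ≤ F(x) + αγΔ holds, where Δ = ∇f(x)ᵀd + ψ(x+d)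 − ψ(x). In particular, a backtracking line search that starts at α = 1 and multiplies α by β ∈ (0,1) terminates finitely with α ≥ min{1, β(1 − γ)·((1 − √η)σ + (1 + √η)m)/(L(1 + √η))}. -/
/-
Setting: minimize F = f + ψ over ℝⁿ (modeled as `EuclideanSpace ℝ (Fin n)`), where
f : ℝⁿ → ℝ is smooth and ψ : ℝⁿ → ℝ ∪ {+∞} (modeled as `EReal`-valued, never ⊥)
is convex, proper and closed.  The quadratic model at x with symmetric operator H is
Q(d) = ⟪∇f(x), d⟫ + (1/2)⟪H d, d⟫ + ψ(x+d) − ψ(x), and Δ(d) = ⟪∇f(x), d⟫ + ψ(x+d) − ψ(x).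
-/

open scoped RealInnerProductSpace
open Set Filter Topology

noncomputable section

/-!
Strong convexity of `Q` on the segment `[0, d]`, with `Q(0) = 0`, gives
`Q(l d) ≤ l Q(d) - (σ/2) l (1 - l) ‖d‖²`, while `Q(d) ≤ (1 - η) Q(l d)`. The choice
`l = 1/(1 + √η)` (a limit `l → 1` when `η = 0`) turns this into
`Q(d) ≤ -(1 - √η) σ ‖d‖² / (2 (1 + √η))`, and since `½ dᵀHd ≥ ½ m ‖d‖²`,
`Δ ≤ -(c/2) ‖d‖²` with `c = ((1 - √η) σ + (1 + √η) m)/(1 + √η) > 0`. The descent lemma for `f`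
and convexity of `ψ` give `F(x + α d) ≤ F(x) + α Δ + (L/2) α² ‖d‖²`, and for `α ≤ (1 - γ) c / L`
the last term is dominated by `-(1 - γ) α Δ`. Backtracking stops at the first accepted `βⁱ`,
and the rejected `βⁱ⁻¹` exceeded `min 1 ((1 - γ) c / L)`.
-/

section Descent

variable {E : Type*} [NormedAddCommGroup E] [InnerProductSpace ℝ E] [CompleteSpace E]

theorem descent_lemma {f : E → ℝ} {L : ℝ} (hf : Differentiable ℝ f)
    (hlip : ∀ y z, ‖gradient f y - gradient f z‖ ≤ L * ‖y - z‖) (x v : E) :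
    f (x + v) ≤ f x + ⟪gradient f x, v⟫ + L / 2 * ‖v‖ ^ 2 := by
  set φ : ℝ → ℝ := fun t => f (x + t • v) - t * ⟪gradient f x, v⟫ - L / 2 * t ^ 2 * ‖v‖ ^ 2
  have hφ : ∀ t, HasDerivAt φ
      (⟪gradient f (x + t • v) - gradient f x, v⟫ - L * t * ‖v‖ ^ 2) t := by
    intro t
    have hline : HasDerivAt (fun s : ℝ => x + s • v) v t := by
      simpa using ((hasDerivAt_id t).smul_const v).const_add x
    have := (((hf _).hasGradientAt.hasFDerivAt.comp_hasDerivAt t hline).sub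
      ((hasDerivAt_id t).mul_const ⟪gradient f x, v⟫)).sub
      (((hasDerivAt_pow 2 t).const_mul (L / 2)).mul_const (‖v‖ ^ 2))
    refine this.congr_deriv ?_
    simp only [InnerProductSpace.toDual_apply_apply, inner_sub_left]
    ring
  have hanti : AntitoneOn φ (Ici 0) := by
    refine antitoneOn_of_hasDerivWithinAt_nonpos (convex_Ici 0)
      (fun t _ => (hφ t).continuousAt.continuousWithinAt)
      (fun t _ => (hφ t).hasDerivWithinAt) fun t ht => ?_
    rw [interior_Ici, mem_Ioi] at ht
    rw [sub_nonpos]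
    calc ⟪gradient f (x + t • v) - gradient f x, v⟫
        ≤ ‖gradient f (x + t • v) - gradient f x‖ * ‖v‖ := real_inner_le_norm _ _
      _ ≤ L * ‖t • v‖ * ‖v‖ := by
          gcongr
          simpa using hlip (x + t • v) x
      _ = L * t * ‖v‖ ^ 2 := by rw [norm_smul, Real.norm_of_nonneg ht.le]; ring
  have := hanti self_mem_Ici (mem_Ici.2 zero_le_one) zero_le_one
  simp only [φ, one_smul, zero_smul, add_zero, one_mul, zero_mul, sub_zero, one_pow, mul_one,
    ne_eq, OfNat.ofNat_ne_zero, not_false_eq_true, zero_pow, mul_zero] at this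
  linarith

end Descent

section Model

variable {n : ℕ}

theorem IsSmallestEigenvalue.mul_norm_sq_le
    {H : EuclideanSpace ℝ (Fin n) →L[ℝ] EuclideanSpace ℝ (Fin n)} {m : ℝ}
    (hm : IsSmallestEigenvalue H m) (u : EuclideanSpace ℝ (Fin n)) :
    m * ‖u‖ ^ 2 ≤ ⟪H u, u⟫ := by
  rcases eq_or_ne u 0 with rfl | hu
  · simp
  have hnorm : ‖u‖ ≠ 0 := norm_ne_zero_iff.2 hu
  have hunit : ‖‖u‖⁻¹ • u‖ = 1 := by
    rw [norm_smul, norm_inv, norm_norm, inv_mul_cancel₀ hnorm]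
  have := hm.2 ⟨_, hunit, rfl⟩
  rw [map_smul, real_inner_smul_left, real_inner_smul_right, ← mul_assoc, ← sq] at this
  calc m * ‖u‖ ^ 2 ≤ ‖u‖⁻¹ ^ 2 * ⟪H u, u⟫ * ‖u‖ ^ 2 := by gcongr
    _ = ⟪H u, u⟫ := by field_simp

theorem StrongConvexE.apply_smul_le {σ : ℝ} {g : EuclideanSpace ℝ (Fin n) → EReal}
    (hg : StrongConvexE σ g) (h0 : g 0 = 0) {d : EuclideanSpace ℝ (Fin n)} {q : ℝ}
    (hq : g d = q) {l : ℝ} (hl0 : 0 ≤ l) (hl1 : l ≤ 1) :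
    g (l • d) ≤ ((l * q - σ / 2 * (l * (1 - l)) * ‖d‖ ^ 2 : ℝ) : EReal) := by
  have h := hg d 0 l (1 - l) hl0 (sub_nonneg.2 hl1) (add_sub_cancel l 1)
  simp only [smul_zero, add_zero, h0, hq, norm_zero, norm_smul, Real.norm_of_nonneg hl0] at h
  rw [EReal.sub_le_iff_le_add (.inl (EReal.coe_ne_bot _)) (.inl (EReal.coe_ne_top _))] at h
  refine h.trans_eq ?_
  norm_cast
  ring

theorem StrongConvexE.apply_le_of_forall_le_mul {σ s q : ℝ}
    {g : EuclideanSpace ℝ (Fin n) → EReal} (hg : StrongConvexE σ g) (h0 : g 0 = 0)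
    {d : EuclideanSpace ℝ (Fin n)} (hq : g d = q) (hs0 : 0 ≤ s) (hs1 : s ≤ 1)
    (happrox : ∀ e, g d ≤ ((1 - s ^ 2 : ℝ) : EReal) * g e) :
    q ≤ -((1 - s) * σ / (1 + s)) / 2 * ‖d‖ ^ 2 := by
  have hsegment : ∀ l ∈ Ioo (0 : ℝ) 1,
      q ≤ (1 - s ^ 2) * (l * q - σ / 2 * (l * (1 - l)) * ‖d‖ ^ 2) := by
    intro l hl
    have h := (happrox (l • d)).trans <| mul_le_mul_of_nonneg_left
      (hg.apply_smul_le h0 hq hl.1.le hl.2.le) (EReal.coe_nonneg.2 (by nlinarith))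
    rw [hq] at h
    exact_mod_cast h
  rcases hs0.eq_or_lt with rfl | hs
  · -- For `s = 0` no single `l` suffices: let `l` increase to `1`.
    have hlim : Tendsto (fun l : ℝ => -(σ / 2) * l * ‖d‖ ^ 2) (𝓝[<] 1)
        (𝓝 (-(σ / 2) * 1 * ‖d‖ ^ 2)) :=
      ((continuous_const_mul _).mul_const _).tendsto 1 |>.mono_left nhdsWithin_le_nhds
    calc q ≤ -(σ / 2) * 1 * ‖d‖ ^ 2 := by
          refine ge_of_tendsto hlim ?_
          filter_upwards [Ioo_mem_nhdsLT zero_lt_one] with l hl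
          have h := hsegment l hl
          have : 0 < 1 - l := sub_pos.2 hl.2
          nlinarith
      _ = _ := by ring
  · have h := hsegment (1 / (1 + s)) ⟨by positivity, by rw [div_lt_one (by positivity)]; linarith⟩
    have h1s : 0 < 1 + s := by linarith
    have hscaled : s * q ≤ s * (-((1 - s) * σ / (1 + s)) / 2 * ‖d‖ ^ 2) := by
      have hsplit : (1 - s ^ 2) *
            (1 / (1 + s) * q - σ / 2 * (1 / (1 + s) * (1 - 1 / (1 + s))) * ‖d‖ ^ 2)
          = (1 - s) * q + s * (-((1 - s) * σ / (1 + s)) / 2 * ‖d‖ ^ 2) := by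
        field_simp
        ring
      linarith
    exact le_of_mul_le_mul_left hscaled hs

end Model

section LineSearch

variable {n : ℕ}

def ArmijoCondition (f : EuclideanSpace ℝ (Fin n) → ℝ) (ψ : EuclideanSpace ℝ (Fin n) → EReal)
    (x d : EuclideanSpace ℝ (Fin n)) (γ α : ℝ) : Prop :=
  Fm f ψ (x + α • d) ≤ Fm f ψ x + ((α * γ : ℝ) : EReal) * Dm f ψ x d

theorem Qm_eq_Dm_add (f : EuclideanSpace ℝ (Fin n) → ℝ) (ψ : EuclideanSpace ℝ (Fin n) → EReal)
    (H : EuclideanSpace ℝ (Fin n) →L[ℝ] EuclideanSpace ℝ (Fin n))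
    (x d : EuclideanSpace ℝ (Fin n)) :
    Qm f ψ H x d = Dm f ψ x d + ((1 / 2 * ⟪H d, d⟫ : ℝ) : EReal) := by
  simp only [Qm, Dm, sub_eq_add_neg, EReal.coe_add]
  ac_rfl

theorem Qm_zero_s3 {f : EuclideanSpace ℝ (Fin n) → ℝ} {ψ : EuclideanSpace ℝ (Fin n) → EReal}
    {H : EuclideanSpace ℝ (Fin n) →L[ℝ] EuclideanSpace ℝ (Fin n)} {x : EuclideanSpace ℝ (Fin n)}
    {px : ℝ} (hpx : ψ x = px) : Qm f ψ H x 0 = 0 := by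
  simp [Qm, hpx]

theorem Dm_eq_coe {f : EuclideanSpace ℝ (Fin n) → ℝ} {ψ : EuclideanSpace ℝ (Fin n) → EReal}
    {x d : EuclideanSpace ℝ (Fin n)} {px pd : ℝ} (hpx : ψ x = px) (hpd : ψ (x + d) = pd) :
    Dm f ψ x d = ((⟪gradient f x, d⟫ + pd - px : ℝ) : EReal) := by
  rw [Dm, hpx, hpd]
  norm_cast

theorem decrement_le_of_forall_Qm_le_mul {f : EuclideanSpace ℝ (Fin n) → ℝ}
    {ψ : EuclideanSpace ℝ (Fin n) → EReal}
    {H : EuclideanSpace ℝ (Fin n) →L[ℝ] EuclideanSpace ℝ (Fin n)} {x d : EuclideanSpace ℝ (Fin n)}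
    {σ m s px pd : ℝ} (hsc : StrongConvexE σ (Qm f ψ H x)) (hm : IsSmallestEigenvalue H m)
    (hpx : ψ x = px) (hpd : ψ (x + d) = pd) (hs0 : 0 ≤ s) (hs1 : s ≤ 1)
    (happrox : ∀ e, Qm f ψ H x d ≤ ((1 - s ^ 2 : ℝ) : EReal) * Qm f ψ H x e) :
    ⟪gradient f x, d⟫ + pd - px ≤ -(((1 - s) * σ + (1 + s) * m) / (1 + s) / 2) * ‖d‖ ^ 2 := by
  have hmodel : ⟪gradient f x, d⟫ + pd - px + 1 / 2 * ⟪H d, d⟫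
      ≤ -((1 - s) * σ / (1 + s)) / 2 * ‖d‖ ^ 2 :=
    hsc.apply_le_of_forall_le_mul (Qm_zero_s3 hpx)
      (by rw [Qm_eq_Dm_add, Dm_eq_coe hpx hpd]; norm_cast) hs0 hs1 happrox
  have hHd := hm.mul_norm_sq_le d
  have hsplit : -(((1 - s) * σ + (1 + s) * m) / (1 + s) / 2) * ‖d‖ ^ 2
      = -((1 - s) * σ / (1 + s)) / 2 * ‖d‖ ^ 2 - 1 / 2 * (m * ‖d‖ ^ 2) := by
    field_simp
    ring
  linarith

theorem armijoCondition_of_le {f : EuclideanSpace ℝ (Fin n) → ℝ}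
    {ψ : EuclideanSpace ℝ (Fin n) → EReal} {x d : EuclideanSpace ℝ (Fin n)} {L c γ α px pd : ℝ}
    (hf : Differentiable ℝ f) (hlip : ∀ y z, ‖gradient f y - gradient f z‖ ≤ L * ‖y - z‖)
    (hψ : ConvexE ψ) (hpx : ψ x = px) (hpd : ψ (x + d) = pd) (hL : 0 < L) (hγ : γ ≤ 1)
    (hΔ : ⟪gradient f x, d⟫ + pd - px ≤ -(c / 2) * ‖d‖ ^ 2)
    (hα0 : 0 ≤ α) (hα1 : α ≤ 1) (hα : α ≤ (1 - γ) * c / L) :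
    ArmijoCondition f ψ x d γ α := by
  have hf_le := descent_lemma hf hlip x (α • d)
  rw [real_inner_smul_right, norm_smul, Real.norm_of_nonneg hα0] at hf_le
  have hψ_le : ψ (x + α • d) ≤ ((α * pd + (1 - α) * px : ℝ) : EReal) := by
    have h := hψ (x + d) x α (1 - α) hα0 (sub_nonneg.2 hα1) (add_sub_cancel α 1)
    rw [show α • (x + d) + (1 - α) • x = x + α • d by module, hpd, hpx] at h
    exact h.trans_eq (by norm_cast)
  have hcurv : L * α * ‖d‖ ^ 2 ≤ -(2 * (1 - γ)) * (⟪gradient f x, d⟫ + pd - px) := by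
    have hLα : L * α ≤ (1 - γ) * c := by rwa [le_div_iff₀ hL, mul_comm] at hα
    nlinarith [sq_nonneg ‖d‖]
  have hreal : f (x + α • d) + (α * pd + (1 - α) * px)
      ≤ f x + px + α * γ * (⟪gradient f x, d⟫ + pd - px) := by
    nlinarith
  calc Fm f ψ (x + α • d)
      ≤ ((f (x + α • d) : ℝ) : EReal) + ((α * pd + (1 - α) * px : ℝ) : EReal) :=
        add_le_add le_rfl hψ_le
    _ ≤ ((f x + px + α * γ * (⟪gradient f x, d⟫ + pd - px) : ℝ) : EReal) := by
        exact_mod_cast hreal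
    _ = Fm f ψ x + ((α * γ : ℝ) : EReal) * Dm f ψ x d := by
        rw [Fm, Dm_eq_coe hpx hpd, hpx]
        norm_cast

end LineSearch

theorem backtracking_exists_isLeast {P : ℝ → Prop} {a β : ℝ} (ha : 0 < a) (hβ0 : 0 < β)
    (hβ1 : β < 1) (hP : ∀ α, 0 < α → α ≤ min 1 a → P α) :
    ∃ i : ℕ, IsLeast {j : ℕ | P (β ^ j)} i ∧ min 1 (β * a) ≤ β ^ i := by
  classical
  have hex : ∃ j : ℕ, P (β ^ j) := by
    obtain ⟨j, hj⟩ := exists_pow_lt_of_lt_one (lt_min one_pos ha) hβ1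
    exact ⟨j, hP _ (pow_pos hβ0 j) hj.le⟩
  refine ⟨Nat.find hex, ⟨Nat.find_spec hex, fun j hj => Nat.find_min' hex hj⟩, ?_⟩
  rcases Nat.eq_zero_or_eq_succ_pred (Nat.find hex) with h | h
  · rw [h, pow_zero]
    exact min_le_left _ _
  · set k := (Nat.find hex).pred
    have hk : ¬ P (β ^ k) := Nat.find_min hex (by omega)
    have hak : a < β ^ k := by
      by_contra! hle
      exact hk (hP _ (pow_pos hβ0 k) (le_min (pow_le_one₀ hβ0.le hβ1.le) hle))
    rw [h, pow_succ']
    exact (min_le_right _ _).trans (by gcongr)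

theorem armijo_line_search_bound_general {n : ℕ}
    (f : EuclideanSpace ℝ (Fin n) → ℝ) (ψ : EuclideanSpace ℝ (Fin n) → EReal)
    (H : EuclideanSpace ℝ (Fin n) →L[ℝ] EuclideanSpace ℝ (Fin n))
    (x d : EuclideanSpace ℝ (Fin n)) (L σ m η γ : ℝ)
    (hf : Differentiable ℝ f) (hL : 0 < L)
    (hlip : ∀ y z, ‖gradient f y - gradient f z‖ ≤ L * ‖y - z‖)
    (hψconv : ConvexE ψ) (hψproper : ProperPsi ψ)
    (hdom : ψ x ≠ ⊤)
    (hsc : StrongConvexE σ (Qm f ψ H x))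
    (hm : IsSmallestEigenvalue H m)
    (hη0 : 0 ≤ η) (hη1 : η < 1)
    (hpos : 0 < (1 - Real.sqrt η) * σ + (1 + Real.sqrt η) * m)
    (happrox : Qm f ψ H x d ≤ ((1 - η : ℝ) : EReal) * ⨅ e, Qm f ψ H x e)
    (hγ1 : γ < 1) :
    (∀ α : ℝ, 0 < α →
        α ≤ min 1 ((1 - γ) * ((1 - Real.sqrt η) * σ + (1 + Real.sqrt η) * m) /
            (L * (1 + Real.sqrt η))) →
        Fm f ψ (x + α • d) ≤ Fm f ψ x + ((α * γ : ℝ) : EReal) * Dm f ψ x d) ∧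
      ∀ β : ℝ, 0 < β → β < 1 →
        ∃ i : ℕ,
          IsLeast {j : ℕ |
              Fm f ψ (x + β ^ j • d) ≤ Fm f ψ x + ((β ^ j * γ : ℝ) : EReal) * Dm f ψ x d} i ∧
            min 1 (β * (1 - γ) * ((1 - Real.sqrt η) * σ + (1 + Real.sqrt η) * m) /
                (L * (1 + Real.sqrt η))) ≤ β ^ i := by
  set s := Real.sqrt η
  have hs0 : 0 ≤ s := Real.sqrt_nonneg η
  have hs1 : s ≤ 1 := Real.sqrt_le_one.2 hη1.le
  obtain ⟨px, hpx⟩ : ∃ p : ℝ, ψ x = p := ⟨_, (EReal.coe_toReal hdom (hψproper.1 x)).symm⟩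
  have happrox' : ∀ e, Qm f ψ H x d ≤ ((1 - s ^ 2 : ℝ) : EReal) * Qm f ψ H x e := fun e => by
    rw [Real.sq_sqrt hη0]
    exact happrox.trans (mul_le_mul_of_nonneg_left (iInf_le _ e) (EReal.coe_nonneg.2 (by linarith)))
  have hψd : ψ (x + d) ≠ ⊤ := fun htop => by
    have h := happrox' 0
    rw [Qm_zero_s3 hpx, mul_zero, Qm, htop, EReal.coe_add_top, hpx, EReal.top_sub_coe] at h
    exact absurd h (by simp)
  obtain ⟨pd, hpd⟩ : ∃ p : ℝ, ψ (x + d) = p := ⟨_, (EReal.coe_toReal hψd (hψproper.1 _)).symm⟩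
  have hΔ := decrement_le_of_forall_Qm_le_mul hsc hm hpx hpd hs0 hs1 happrox'
  have harmijo : ∀ α, 0 < α →
      α ≤ min 1 ((1 - γ) * ((1 - s) * σ + (1 + s) * m) / (L * (1 + s))) →
      ArmijoCondition f ψ x d γ α := fun α hα0 hα =>
    armijoCondition_of_le hf hlip hψconv hpx hpd hL hγ1.le hΔ hα0.le (hα.trans (min_le_left _ _))
      ((hα.trans (min_le_right _ _)).trans_eq (by field_simp))
  refine ⟨harmijo, fun β hβ0 hβ1 => ?_⟩
  have ha : 0 < (1 - γ) * ((1 - s) * σ + (1 + s) * m) / (L * (1 + s)) :=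
    div_pos (mul_pos (sub_pos.2 hγ1) hpos) (mul_pos hL (by linarith))
  obtain ⟨i, hi, hle⟩ := backtracking_exists_isLeast ha hβ0 hβ1 harmijo
  exact ⟨i, hi, hle.trans_eq' (by ring_nf)⟩

/-- With ∇f L-Lipschitz, Q σ-strongly convex, m the smallest eigenvalue of H,
(1−√η)σ + (1+√η)m > 0, and d an η-approximate subproblem solution, every step size
α ∈ (0, min{1, (1−γ)((1−√η)σ+(1+√η)m)/(L(1+√η))}] satisfies the Armijo condition
F(x+αd) ≤ F(x) + αγΔ; in particular backtracking from α = 1 with factor β ∈ (0,1)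
terminates finitely with α ≥ min{1, β(1−γ)((1−√η)σ+(1+√η)m)/(L(1+√η))}. -/
theorem armijo_line_search_bound {n : ℕ}
    (f : EuclideanSpace ℝ (Fin n) → ℝ) (ψ : EuclideanSpace ℝ (Fin n) → EReal)
    (H : EuclideanSpace ℝ (Fin n) →L[ℝ] EuclideanSpace ℝ (Fin n))
    (x d : EuclideanSpace ℝ (Fin n)) (L σ m η γ : ℝ)
    (hf : Differentiable ℝ f) (hL : 0 < L)
    (hlip : ∀ y z, ‖gradient f y - gradient f z‖ ≤ L * ‖y - z‖)
    (hψconv : ConvexE ψ) (hψproper : ProperPsi ψ) (hψclosed : ClosedPsi ψ)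
    (hdom : ψ x ≠ ⊤)
    (hH : SymmCLM H)
    (hσ : 0 < σ) (hsc : StrongConvexE σ (Qm f ψ H x))
    (hm : IsSmallestEigenvalue H m)
    (hη0 : 0 ≤ η) (hη1 : η < 1)
    (hpos : 0 < (1 - Real.sqrt η) * σ + (1 + Real.sqrt η) * m)
    (happrox : Qm f ψ H x d ≤ ((1 - η : ℝ) : EReal) * ⨅ e, Qm f ψ H x e)
    (hγ0 : 0 < γ) (hγ1 : γ < 1) :
    (∀ α : ℝ, 0 < α →
        α ≤ min 1 ((1 - γ) * ((1 - Real.sqrt η) * σ + (1 + Real.sqrt η) * m) /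
            (L * (1 + Real.sqrt η))) →
        Fm f ψ (x + α • d) ≤ Fm f ψ x + ((α * γ : ℝ) : EReal) * Dm f ψ x d) ∧
      ∀ β : ℝ, 0 < β → β < 1 →
        ∃ i : ℕ,
          IsLeast {j : ℕ |
              Fm f ψ (x + β ^ j • d) ≤ Fm f ψ x + ((β ^ j * γ : ℝ) : EReal) * Dm f ψ x d} i ∧
            min 1 (β * (1 - γ) * ((1 - Real.sqrt η) * σ + (1 + Real.sqrt η) * m) /
                (L * (1 + Real.sqrt η))) ≤ β ^ i :=
  armijo_line_search_bound_general f ψ H x d L σ m η γ hf hL hlip hψconv hψproper hdom hsc hm hη0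
    hη1 hpos happrox hγ1
end
end

section
/- Let ψ : ℝⁿ → ℝ ∪ {+∞} be convex, proper, and closed, f : ℝⁿ → ℝ differentiable, and let H be a symmetric matrix satisfying dᵀHd ≥ σ‖d‖² for all d, with σ > 0. If d satisfies the inexactness condition Q(d) ≤ (1 − η)Q* for some η ∈ [0,1), where Q(d) = ∇f(x)ᵀd + (1/2)dᵀHd + ψ(x+d) − ψ(x) and Q* = inf Q, then Δ = ∇f(x)ᵀd + ψ(x+d) − ψ(x) satisfies Δ ≤ −(1/(1 + √η))·dᵀHd ≤ −(σ/(1 + √η))·‖d‖². -/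
/-
Setting: minimize F = f + ψ over ℝⁿ (modeled as `EuclideanSpace ℝ (Fin n)`), where
f : ℝⁿ → ℝ is smooth and ψ : ℝⁿ → ℝ ∪ {+∞} (modeled as `EReal`-valued, never ⊥)
is convex, proper and closed.  The quadratic model at x with symmetric operator H is
Q(d) = ⟪∇f(x), d⟫ + (1/2)⟪H d, d⟫ + ψ(x+d) − ψ(x), and Δ(d) = ⟪∇f(x), d⟫ + ψ(x+d) − ψ(x).
-/

open scoped RealInnerProductSpace
open Set Filter Topology

noncomputable section

/-
Along the ray `t ↦ t • d`, convexity of `ψ` gives `Q(t d) ≤ t Δ + t² dᵀHd / 2` for `t ∈ [0, 1]`,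
so `Q(d) ≤ (1 - η) Q*` bounds `Q(d) = Δ + dᵀHd / 2` by `(1 - η)` times the minimum of that
parabola. Unless `Δ ≤ -dᵀHd` already, the minimum is attained inside `[0, 1]` and the resulting
quadratic inequality in `Δ` factors with roots `-dᵀHd / (1 ± √η)`.
-/

section QuadraticModel

variable {n : ℕ} {f : EuclideanSpace ℝ (Fin n) → ℝ} {ψ : EuclideanSpace ℝ (Fin n) → EReal}
  {H : EuclideanSpace ℝ (Fin n) →L[ℝ] EuclideanSpace ℝ (Fin n)} {x d : EuclideanSpace ℝ (Fin n)}
  {p q : ℝ}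

theorem Qm_eq_coe (hp : ψ x = p) (hq : ψ (x + d) = q) :
    Qm f ψ H x d = ((⟪gradient f x, d⟫ + q - p + 1 / 2 * ⟪H d, d⟫ : ℝ) : EReal) := by
  rw [Qm, hp, hq]
  norm_cast
  ring_nf

theorem Dm_eq_coe_s4 (hp : ψ x = p) (hq : ψ (x + d) = q) :
    Dm f ψ x d = ((⟪gradient f x, d⟫ + q - p : ℝ) : EReal) := by
  rw [Dm, hp, hq]
  norm_cast

theorem Qm_eq_top (hx : ψ x ≠ ⊤) (hxd : ψ (x + d) = ⊤) : Qm f ψ H x d = ⊤ := by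
  rw [Qm, hxd, EReal.coe_add_top, EReal.top_sub hx]

theorem Qm_smul_le (hψ : ConvexE ψ) (hp : ψ x = p) (hq : ψ (x + d) = q) {t : ℝ}
    (ht : t ∈ Icc (0 : ℝ) 1) :
    Qm f ψ H x (t • d) ≤
      ((t * (⟪gradient f x, d⟫ + q - p) + t ^ 2 * (1 / 2 * ⟪H d, d⟫) : ℝ) : EReal) := by
  have hconv : ψ (x + t • d) ≤ (((1 - t) * p + t * q : ℝ) : EReal) := by
    have h := hψ x (x + d) (1 - t) t (by linarith [ht.2]) ht.1 (by ring)
    rwa [smul_add, ← add_assoc, ← add_smul, sub_add_cancel, one_smul, hp, hq] at h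
  calc Qm f ψ H x (t • d)
      ≤ ((⟪gradient f x, t • d⟫ + 1 / 2 * ⟪H (t • d), t • d⟫ : ℝ) : EReal)
          + (((1 - t) * p + t * q : ℝ) : EReal) - p := by
        rw [Qm, hp]
        exact EReal.sub_le_sub (add_le_add_right hconv _) le_rfl
    _ = _ := by
        rw [map_smul, real_inner_smul_right, real_inner_smul_left, real_inner_smul_right]
        norm_cast
        ring_nf

end QuadraticModel

theorem le_neg_one_div_one_add_sqrt_mul {D a η : ℝ} (ha : 0 ≤ a) (hη0 : 0 ≤ η) (hη1 : η < 1)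
    (h : ∀ t ∈ Icc (0 : ℝ) 1, D + 1 / 2 * a ≤ (1 - η) * (t * D + t ^ 2 * (1 / 2 * a))) :
    D ≤ -(1 / (1 + √η)) * a := by
  set s := √η
  have hs0 : 0 ≤ s := Real.sqrt_nonneg η
  have hs1 : s < 1 := by simpa using Real.sqrt_lt_sqrt hη0 hη1
  have hss : s ^ 2 = η := Real.sq_sqrt hη0
  suffices (1 + s) * D + a ≤ 0 by
    rw [neg_mul, one_div_mul_eq_div, le_neg, div_le_iff₀ (by positivity)]
    linarith
  rcases le_or_gt D (-a) with hDa | hDa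
  · nlinarith
  have hD0 : D + 1 / 2 * a ≤ 0 := by simpa using h 0 ⟨le_rfl, zero_le_one⟩
  have ha0 : 0 < a := by linarith
  -- `t = -D / a` minimizes `t ↦ t * D + t ^ 2 * (a / 2)`
  have hmin := h (-D / a) ⟨div_nonneg (by linarith) ha, (div_le_one ha0).2 (by linarith)⟩
  have hval : -D / a * D + (-D / a) ^ 2 * (1 / 2 * a) = -(D ^ 2 / (2 * a)) := by
    field_simp
    ring
  rw [hval, mul_neg, ← mul_div_assoc, le_neg, div_le_iff₀ (by positivity)] at hmin
  -- `(1 - η) D² + 2aD + a² = ((1 + s) D + a) ((1 - s) D + a)`, and the second factor is positive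
  have hpos : 0 < (1 - s) * D + a := by nlinarith
  nlinarith

theorem Delta_bound_of_inexact_posdef_general {n : ℕ}
    (f : EuclideanSpace ℝ (Fin n) → ℝ) (ψ : EuclideanSpace ℝ (Fin n) → EReal)
    (H : EuclideanSpace ℝ (Fin n) →L[ℝ] EuclideanSpace ℝ (Fin n))
    (x d : EuclideanSpace ℝ (Fin n)) (σ η : ℝ)
    (hψconv : ConvexE ψ) (hψproper : ProperPsi ψ)
    (hdom : ψ x ≠ ⊤)
    (hσ : 0 < σ) (hσH : ∀ e : EuclideanSpace ℝ (Fin n), σ * ‖e‖ ^ 2 ≤ ⟪H e, e⟫)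
    (hη0 : 0 ≤ η) (hη1 : η < 1)
    (happrox : Qm f ψ H x d ≤ ((1 - η : ℝ) : EReal) * ⨅ e, Qm f ψ H x e) :
    Dm f ψ x d ≤ ((-(1 / (1 + Real.sqrt η)) * ⟪H d, d⟫ : ℝ) : EReal) ∧
      -(1 / (1 + Real.sqrt η)) * ⟪H d, d⟫ ≤ -(σ / (1 + Real.sqrt η)) * ‖d‖ ^ 2 := by
  obtain ⟨hbot, -⟩ := hψproper
  have h1η : (0 : EReal) ≤ ((1 - η : ℝ) : EReal) := EReal.coe_nonneg.2 (by linarith)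
  obtain ⟨p, hp⟩ : ∃ p : ℝ, ψ x = p := ⟨_, (EReal.coe_toReal hdom (hbot x)).symm⟩
  have hQ0 : Qm f ψ H x 0 = 0 := by
    rw [Qm_eq_coe hp (by rwa [add_zero])]
    simp
  have hQd_nonpos : Qm f ψ H x d ≤ 0 := happrox.trans <| by
    simpa [hQ0] using mul_le_mul_of_nonneg_left (iInf_le (Qm f ψ H x) 0) h1η
  have hxd : ψ (x + d) ≠ ⊤ := fun htop => by
    simp [Qm_eq_top hdom htop] at hQd_nonpos
  obtain ⟨q, hq⟩ : ∃ q : ℝ, ψ (x + d) = q := ⟨_, (EReal.coe_toReal hxd (hbot _)).symm⟩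
  have hdecrease := le_neg_one_div_one_add_sqrt_mul (le_trans (by positivity) (hσH d)) hη0 hη1
    fun t ht => by
      have h := happrox.trans <| mul_le_mul_of_nonneg_left
        (iInf_le_of_le (t • d) (Qm_smul_le (H := H) hψconv hp hq ht)) h1η
      rw [Qm_eq_coe hp hq] at h
      exact_mod_cast h
  refine ⟨by rw [Dm_eq_coe_s4 hp hq]; exact_mod_cast hdecrease, ?_⟩
  have h1s : 0 < 1 + √η := by positivity
  rw [neg_mul, neg_mul, neg_le_neg_iff, div_mul_eq_mul_div, one_div_mul_eq_div]
  exact div_le_div_of_nonneg_right (hσH d) h1s.le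

/-- If dᵀHd ≥ σ‖d‖² for all d with σ > 0 and d satisfies Q(d) ≤ (1 − η)Q*
for some η ∈ [0,1), then Δ ≤ −(1/(1+√η))·dᵀHd ≤ −(σ/(1+√η))·‖d‖². -/
theorem Delta_bound_of_inexact_posdef {n : ℕ}
    (f : EuclideanSpace ℝ (Fin n) → ℝ) (ψ : EuclideanSpace ℝ (Fin n) → EReal)
    (H : EuclideanSpace ℝ (Fin n) →L[ℝ] EuclideanSpace ℝ (Fin n))
    (x d : EuclideanSpace ℝ (Fin n)) (σ η : ℝ)
    (hf : DifferentiableAt ℝ f x) (hH : SymmCLM H)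
    (hψconv : ConvexE ψ) (hψproper : ProperPsi ψ) (hψclosed : ClosedPsi ψ)
    (hdom : ψ x ≠ ⊤)
    (hσ : 0 < σ) (hσH : ∀ e : EuclideanSpace ℝ (Fin n), σ * ‖e‖ ^ 2 ≤ ⟪H e, e⟫)
    (hη0 : 0 ≤ η) (hη1 : η < 1)
    (happrox : Qm f ψ H x d ≤ ((1 - η : ℝ) : EReal) * ⨅ e, Qm f ψ H x e) :
    Dm f ψ x d ≤ ((-(1 / (1 + Real.sqrt η)) * ⟪H d, d⟫ : ℝ) : EReal) ∧
      -(1 / (1 + Real.sqrt η)) * ⟪H d, d⟫ ≤ -(σ / (1 + Real.sqrt η)) * ‖d‖ ^ 2 :=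
  Delta_bound_of_inexact_posdef_general f ψ H x d σ η hψconv hψproper hdom hσ hσH hη0 hη1 happrox
end
end

section
/- Let f : ℝⁿ → ℝ be convex and differentiable, ψ : ℝⁿ → ℝ ∪ {+∞} convex, proper, and closed, F = f + ψ, and let x* be a minimizer of F with F* = F(x*). Suppose μ ≥ 0 and F satisfies the optimal-set strong convexity inequality at x with respect to x*: for all λ ∈ [0,1], F(λx + (1 − λ)x*) ≤ λF(x) + (1 − λ)F* − (μλ(1 − λ)/2)‖x − x*‖². Let H be a symmetric matrix. Then for all λ ∈ [0,1], Q* ≤ λ(F* − F(x)) − (μλ(1 − λ)/2)‖x − x*‖² + (λ²/2)(x − x*)ᵀH(x − x*) ≤ λ(F* − F(x)) + (1/2)‖x − x*‖²(‖H‖λ² − μλ(1 − λ)), where Q* = inf_d Q(d) and ‖H‖ is the operator (spectral) norm. In particular, taking λ = μ/(μ + ‖H‖), Q* ≤ (μ/(μ + ‖H‖))·(F* − F(x)). -/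
/-
Setting: minimize F = f + ψ over ℝⁿ (modeled as `EuclideanSpace ℝ (Fin n)`), where
f : ℝⁿ → ℝ is smooth and ψ : ℝⁿ → ℝ ∪ {+∞} (modeled as `EReal`-valued, never ⊥)
is convex, proper and closed.  The quadratic model at x with symmetric operator H is
Q(d) = ⟪∇f(x), d⟫ + (1/2)⟪H d, d⟫ + ψ(x+d) − ψ(x), and Δ(d) = ⟪∇f(x), d⟫ + ψ(x+d) − ψ(x).
-/

open scoped RealInnerProductSpace
open Set Filter Topology

noncomputable section

/-!
Use the step d = λ(x* − x) in the model. The gradient inequality for the convex f gives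
Q(d) ≤ F(x + d) − F(x) + ½ dᵀHd, and since x + d = (1 − λ)x + λx*, optimal-set strong convexity
bounds F(x + d). Moreover dᵀHd = λ²(x − x*)ᵀH(x − x*) ≤ λ²‖H‖‖x − x*‖², and the choice
λ = μ/(μ + ‖H‖) is exactly the one for which ‖H‖λ² = μλ(1 − λ).
-/

theorem ConvexOn.inner_gradient_le_sub {E : Type*} [NormedAddCommGroup E] [InnerProductSpace ℝ E]
    [CompleteSpace E] {f : E → ℝ} (hfconv : ConvexOn ℝ univ f) {x : E}
    (hf : DifferentiableAt ℝ f x) (v : E) :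
    ⟪gradient f x, v⟫ ≤ f (x + v) - f x := by
  have hline : ConvexOn ℝ univ (fun t : ℝ => f (x + t • v)) := by
    simpa [Function.comp_def, AffineMap.lineMap_apply, add_comm] using
      hfconv.comp_affineMap (AffineMap.lineMap x (x + v))
  have hderiv : HasDerivAt (fun t : ℝ => f (x + t • v)) ⟪gradient f x, v⟫ 0 := by
    rw [inner_gradient_left]
    have hpath : HasDerivAt (fun t : ℝ => x + t • v) v 0 := by
      simpa using ((hasDerivAt_id (0 : ℝ)).smul_const v).const_add x
    have hfx : HasFDerivAt f (fderiv ℝ f x) (x + (0 : ℝ) • v) := by simpa using hf.hasFDerivAt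
    exact hfx.comp_hasDerivAt 0 hpath
  simpa [slope_def_field] using
    hline.le_slope_of_hasDerivAt (mem_univ 0) (mem_univ 1) one_pos hderiv

theorem ContinuousLinearMap.real_inner_apply_self_le {E : Type*} [NormedAddCommGroup E]
    [InnerProductSpace ℝ E] (H : E →L[ℝ] E) (u : E) : ⟪H u, u⟫ ≤ ‖H‖ * ‖u‖ ^ 2 :=
  calc ⟪H u, u⟫ ≤ ‖H u‖ * ‖u‖ := real_inner_le_norm _ _
    _ ≤ ‖H‖ * ‖u‖ * ‖u‖ := by gcongr; exact H.le_opNorm u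
    _ = ‖H‖ * ‖u‖ ^ 2 := by ring

theorem mul_div_add_sq_eq (μ h : ℝ) :
    h * (μ / (μ + h)) ^ 2 = μ * (μ / (μ + h)) * (1 - μ / (μ + h)) := by
  rcases eq_or_ne (μ + h) 0 with hzero | hne
  · simp [hzero]
  · field_simp
    ring

theorem div_add_mem_Icc {μ h : ℝ} (hμ : 0 ≤ μ) (hh : 0 ≤ h) : μ / (μ + h) ∈ Icc (0 : ℝ) 1 :=
  ⟨by positivity, div_le_one_of_le₀ (le_add_of_nonneg_right hh) (add_nonneg hμ hh)⟩

theorem EReal.sub_coe_add_coe_le_add_coe (a : EReal) {b c e : ℝ} (h : c - b ≤ e) :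
    a - b + c ≤ a + e := by
  rw [sub_eq_add_neg, add_assoc, ← EReal.coe_neg, ← EReal.coe_add]
  gcongr
  exact_mod_cast (by linarith : -b + c ≤ e)

def OptimalSetStrongConvexAt {E : Type*} [NormedAddCommGroup E] [Module ℝ E] (F : E → EReal)
    (μ : ℝ) (x xstar : E) : Prop :=
  ∀ lam : ℝ, lam ∈ Icc (0 : ℝ) 1 →
    F (lam • x + (1 - lam) • xstar) ≤
      ((lam : ℝ) : EReal) * F x + ((1 - lam : ℝ) : EReal) * F xstar -
        ((μ * lam * (1 - lam) / 2 * ‖x - xstar‖ ^ 2 : ℝ) : EReal)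

section QuadraticModel

variable {n : ℕ} {f : EuclideanSpace ℝ (Fin n) → ℝ} {ψ : EuclideanSpace ℝ (Fin n) → EReal}
  {x xstar : EuclideanSpace ℝ (Fin n)}

theorem Qm_le_Fm_sub_Fm (H : EuclideanSpace ℝ (Fin n) →L[ℝ] EuclideanSpace ℝ (Fin n))
    (hfconv : ConvexOn ℝ univ f) (hf : DifferentiableAt ℝ f x) {p : ℝ} (hp : ψ x = p)
    (d : EuclideanSpace ℝ (Fin n)) :
    Qm f ψ H x d ≤ Fm f ψ (x + d) - Fm f ψ x + ((1 / 2 * ⟪H d, d⟫ : ℝ) : EReal) := by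
  have hgrad := hfconv.inner_gradient_le_sub hf d
  rw [Qm, Fm, Fm, hp, ← EReal.coe_add]
  induction ψ (x + d) using EReal.rec with
  | bot => simp
  | top => simp only [EReal.coe_add_top, EReal.top_sub_coe, EReal.top_add_coe, le_refl]
  | coe q =>
    norm_cast
    linarith

theorem iInf_Qm_le_of_optimalSetStrongConvexAt
    (H : EuclideanSpace ℝ (Fin n) →L[ℝ] EuclideanSpace ℝ (Fin n)) {μ : ℝ}
    (hfconv : ConvexOn ℝ univ f) (hf : DifferentiableAt ℝ f x) {p s : ℝ} (hp : ψ x = p)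
    (hs : Fm f ψ xstar = s) (hossc : OptimalSetStrongConvexAt (Fm f ψ) μ x xstar)
    {lam : ℝ} (hlam : lam ∈ Icc (0 : ℝ) 1) :
    (⨅ e, Qm f ψ H x e) ≤
      ((lam : ℝ) : EReal) * (Fm f ψ xstar - Fm f ψ x) -
          ((μ * lam * (1 - lam) / 2 * ‖x - xstar‖ ^ 2 : ℝ) : EReal) +
        ((lam ^ 2 / 2 * ⟪H (x - xstar), x - xstar⟫ : ℝ) : EReal) := by
  set d := lam • (xstar - x)
  have hFx : Fm f ψ x = ((f x + p : ℝ) : EReal) := by rw [Fm, hp, EReal.coe_add]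
  have hstep : x + d = (1 - lam) • x + (1 - (1 - lam)) • xstar := by module
  have hHd : ⟪H d, d⟫ = lam ^ 2 * ⟪H (x - xstar), x - xstar⟫ := by
    have : d = (-lam) • (x - xstar) := by module
    rw [this, map_smul, real_inner_smul_left, real_inner_smul_right]
    ring
  have hF : Fm f ψ (x + d) ≤
      (((1 - lam) * (f x + p) + lam * s - μ * lam * (1 - lam) / 2 * ‖x - xstar‖ ^ 2 : ℝ) :
        EReal) := by
    have h := hossc (1 - lam) ⟨by linarith [hlam.2], by linarith [hlam.1]⟩
    rw [← hstep, hFx, hs] at h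
    convert h using 1
    norm_cast
    ring
  calc (⨅ e, Qm f ψ H x e) ≤ Qm f ψ H x d := iInf_le _ d
    _ ≤ Fm f ψ (x + d) - Fm f ψ x + ((1 / 2 * ⟪H d, d⟫ : ℝ) : EReal) :=
      Qm_le_Fm_sub_Fm H hfconv hf hp d
    _ ≤ (((1 - lam) * (f x + p) + lam * s - μ * lam * (1 - lam) / 2 * ‖x - xstar‖ ^ 2 : ℝ) :
          EReal) - Fm f ψ x + ((1 / 2 * ⟪H d, d⟫ : ℝ) : EReal) := by
      gcongr
      exact EReal.sub_le_sub hF le_rfl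
    _ = _ := by
      rw [hFx, hs, hHd]
      norm_cast
      ring

end QuadraticModel

theorem Qstar_bound_optimal_set_strong_convexity_general {n : ℕ}
    (f : EuclideanSpace ℝ (Fin n) → ℝ) (ψ : EuclideanSpace ℝ (Fin n) → EReal)
    (H : EuclideanSpace ℝ (Fin n) →L[ℝ] EuclideanSpace ℝ (Fin n))
    (x xstar : EuclideanSpace ℝ (Fin n)) (μ : ℝ)
    (hf : Differentiable ℝ f) (hfconv : ConvexOn ℝ Set.univ f)
    (hψproper : ProperPsi ψ)
    (hdom : ψ x ≠ ⊤)
    (hmin : ∀ y, Fm f ψ xstar ≤ Fm f ψ y)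
    (hμ : 0 ≤ μ)
    (hossc : ∀ lam : ℝ, lam ∈ Set.Icc (0 : ℝ) 1 →
        Fm f ψ (lam • x + (1 - lam) • xstar) ≤
          ((lam : ℝ) : EReal) * Fm f ψ x + ((1 - lam : ℝ) : EReal) * Fm f ψ xstar -
            ((μ * lam * (1 - lam) / 2 * ‖x - xstar‖ ^ 2 : ℝ) : EReal)) :
    (∀ lam : ℝ, lam ∈ Set.Icc (0 : ℝ) 1 →
        (⨅ e, Qm f ψ H x e) ≤
            ((lam : ℝ) : EReal) * (Fm f ψ xstar - Fm f ψ x) -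
                ((μ * lam * (1 - lam) / 2 * ‖x - xstar‖ ^ 2 : ℝ) : EReal) +
              ((lam ^ 2 / 2 * ⟪H (x - xstar), x - xstar⟫ : ℝ) : EReal) ∧
          ((lam : ℝ) : EReal) * (Fm f ψ xstar - Fm f ψ x) -
                ((μ * lam * (1 - lam) / 2 * ‖x - xstar‖ ^ 2 : ℝ) : EReal) +
              ((lam ^ 2 / 2 * ⟪H (x - xstar), x - xstar⟫ : ℝ) : EReal) ≤
            ((lam : ℝ) : EReal) * (Fm f ψ xstar - Fm f ψ x) +
              ((1 / 2 * ‖x - xstar‖ ^ 2 * (‖H‖ * lam ^ 2 - μ * lam * (1 - lam)) : ℝ) : EReal)) ∧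
      (⨅ e, Qm f ψ H x e) ≤ ((μ / (μ + ‖H‖) : ℝ) : EReal) * (Fm f ψ xstar - Fm f ψ x) := by
  obtain ⟨hψbot, -⟩ := hψproper
  obtain ⟨p, hp⟩ : ∃ p : ℝ, ψ x = p := ⟨_, (EReal.coe_toReal hdom (hψbot x)).symm⟩
  have hFstar_ne_top : Fm f ψ xstar ≠ ⊤ :=
    ne_top_of_le_ne_top (by simp [Fm, hp, ← EReal.coe_add]) (hmin x)
  have hFstar_ne_bot : Fm f ψ xstar ≠ ⊥ := by simp [Fm, hψbot]
  obtain ⟨s, hs⟩ : ∃ s : ℝ, Fm f ψ xstar = s :=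
    ⟨_, (EReal.coe_toReal hFstar_ne_top hFstar_ne_bot).symm⟩
  have hQ (lam : ℝ) (hlam : lam ∈ Icc (0 : ℝ) 1) :=
    iInf_Qm_le_of_optimalSetStrongConvexAt H hfconv (hf x) hp hs hossc hlam
  have hcurv (lam : ℝ) :
      lam ^ 2 / 2 * ⟪H (x - xstar), x - xstar⟫ - μ * lam * (1 - lam) / 2 * ‖x - xstar‖ ^ 2 ≤
        1 / 2 * ‖x - xstar‖ ^ 2 * (‖H‖ * lam ^ 2 - μ * lam * (1 - lam)) := by
    nlinarith [H.real_inner_apply_self_le (x - xstar), sq_nonneg lam]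
  refine ⟨fun lam hlam => ⟨hQ lam hlam, EReal.sub_coe_add_coe_le_add_coe _ (hcurv lam)⟩, ?_⟩
  calc (⨅ e, Qm f ψ H x e)
      ≤ _ := (hQ _ (div_add_mem_Icc hμ (norm_nonneg H))).trans
        (EReal.sub_coe_add_coe_le_add_coe _ (hcurv _))
    _ = _ := by rw [mul_div_add_sq_eq, sub_self, mul_zero, EReal.coe_zero, add_zero]

/-- (Lemma on Q*) With f convex differentiable, x* a minimizer of F = f + ψ,
F* = F(x*), μ ≥ 0, and F satisfying the optimal-set strong convexity inequality at x with
respect to x*, for every λ ∈ [0,1]: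
Q* ≤ λ(F* − F(x)) − (μλ(1−λ)/2)‖x − x*‖² + (λ²/2)(x − x*)ᵀH(x − x*)
   ≤ λ(F* − F(x)) + (1/2)‖x − x*‖²(‖H‖λ² − μλ(1−λ)),
and in particular, taking λ = μ/(μ + ‖H‖), Q* ≤ (μ/(μ + ‖H‖))(F* − F(x)). -/
theorem Qstar_bound_optimal_set_strong_convexity {n : ℕ}
    (f : EuclideanSpace ℝ (Fin n) → ℝ) (ψ : EuclideanSpace ℝ (Fin n) → EReal)
    (H : EuclideanSpace ℝ (Fin n) →L[ℝ] EuclideanSpace ℝ (Fin n))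
    (x xstar : EuclideanSpace ℝ (Fin n)) (μ : ℝ)
    (hf : Differentiable ℝ f) (hfconv : ConvexOn ℝ Set.univ f)
    (hψconv : ConvexE ψ) (hψproper : ProperPsi ψ) (hψclosed : ClosedPsi ψ)
    (hdom : ψ x ≠ ⊤)
    (hH : SymmCLM H)
    (hmin : ∀ y, Fm f ψ xstar ≤ Fm f ψ y)
    (hμ : 0 ≤ μ)
    (hossc : ∀ lam : ℝ, lam ∈ Set.Icc (0 : ℝ) 1 →
        Fm f ψ (lam • x + (1 - lam) • xstar) ≤
          ((lam : ℝ) : EReal) * Fm f ψ x + ((1 - lam : ℝ) : EReal) * Fm f ψ xstar -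
            ((μ * lam * (1 - lam) / 2 * ‖x - xstar‖ ^ 2 : ℝ) : EReal)) :
    (∀ lam : ℝ, lam ∈ Set.Icc (0 : ℝ) 1 →
        (⨅ e, Qm f ψ H x e) ≤
            ((lam : ℝ) : EReal) * (Fm f ψ xstar - Fm f ψ x) -
                ((μ * lam * (1 - lam) / 2 * ‖x - xstar‖ ^ 2 : ℝ) : EReal) +
              ((lam ^ 2 / 2 * ⟪H (x - xstar), x - xstar⟫ : ℝ) : EReal) ∧
          ((lam : ℝ) : EReal) * (Fm f ψ xstar - Fm f ψ x) -
                ((μ * lam * (1 - lam) / 2 * ‖x - xstar‖ ^ 2 : ℝ) : EReal) +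
              ((lam ^ 2 / 2 * ⟪H (x - xstar), x - xstar⟫ : ℝ) : EReal) ≤
            ((lam : ℝ) : EReal) * (Fm f ψ xstar - Fm f ψ x) +
              ((1 / 2 * ‖x - xstar‖ ^ 2 * (‖H‖ * lam ^ 2 - μ * lam * (1 - lam)) : ℝ) : EReal)) ∧
      (⨅ e, Qm f ψ H x e) ≤ ((μ / (μ + ‖H‖) : ℝ) : EReal) * (Fm f ψ xstar - Fm f ψ x) :=
  Qstar_bound_optimal_set_strong_convexity_general f ψ H x xstar μ hf hfconv hψproper hdom hmin hμ
    hossc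
end
end

section
/- Let {δ_k}_{k≥0}, {c_k}_{k≥0}, {A_k}_{k≥0} be nonnegative real sequences and A > 0 a constant such that 0 < A_k ≤ A for all k and, for every k ≥ 0 and every λ ∈ [0,1], δ_{k+1} ≤ δ_k + c_k(−λδ_k + (A_k/2)λ²). Then: (i) whenever δ_k ≥ A_k, one has δ_{k+1} ≤ (1 − c_k/2)δ_k; and (ii) if k₀ is an index with δ_{k₀} < A, then for all k ≥ k₀, δ_k ≤ 2A / (Σ_{t=k₀}^{k−1} c_t + 2). -/
/-- For nonnegative real sequences {δ_k}, {c_k}, {A_k} with 0 < A_k ≤ A and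
δ_{k+1} ≤ δ_k + c_k(−λδ_k + (A_k/2)λ²) for all k and all λ ∈ [0,1]:
(i) whenever δ_k ≥ A_k, δ_{k+1} ≤ (1 − c_k/2)δ_k; and
(ii) if δ_{k₀} < A, then for all k ≥ k₀, δ_k ≤ 2A / (Σ_{t=k₀}^{k−1} c_t + 2). -/
theorem sequence_recursion_rates
    (δ c A' : ℕ → ℝ) (A : ℝ)
    (hδ : ∀ k, 0 ≤ δ k) (hc : ∀ k, 0 ≤ c k) (hA'0 : ∀ k, 0 ≤ A' k)
    (hA : 0 < A)
    (hA' : ∀ k, 0 < A' k ∧ A' k ≤ A)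
    (hrec : ∀ k, ∀ lam ∈ Set.Icc (0 : ℝ) 1,
        δ (k + 1) ≤ δ k + c k * (-(lam * δ k) + A' k / 2 * lam ^ 2)) :
    (∀ k, A' k ≤ δ k → δ (k + 1) ≤ (1 - c k / 2) * δ k) ∧
      ∀ k₀ : ℕ, δ k₀ < A → ∀ k, k₀ ≤ k →
        δ k ≤ 2 * A / ((∑ t ∈ Finset.Ico k₀ k, c t) + 2) := by
  have part1 : ∀ k, A' k ≤ δ k → δ (k + 1) ≤ (1 - c k / 2) * δ k := by
    intro k hk
    have h := hrec k 1 ⟨zero_le_one, le_refl 1⟩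
    nlinarith [hc k, hδ k, (hA' k).1]
  refine ⟨part1, ?_⟩
  intro k₀ hk₀ k hk
  induction k, hk using Nat.le_induction with
  | base =>
    simp only [Finset.Ico_self, Finset.sum_empty, zero_add]
    rw [le_div_iff₀ (by norm_num)]
    linarith
  | succ k hk ih =>
    set s := ∑ t ∈ Finset.Ico k₀ k, c t with hs
    have hsnn : 0 ≤ s := Finset.sum_nonneg (fun i _ => hc i)
    have hsum : ∑ t ∈ Finset.Ico k₀ (k + 1), c t = s + c k :=
      Finset.sum_Ico_succ_top hk _
    rw [hsum]
    have hck := hc k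
    have hδk := hδ k
    have hδk1 := hδ (k + 1)
    have hih : δ k * (s + 2) ≤ 2 * A := by
      rw [le_div_iff₀ (by linarith)] at ih; linarith [ih]
    have hδkA : δ k ≤ A := by nlinarith
    -- key: 2A δ(k+1) ≤ 2A δk − c k δk²
    have key : 2 * A * δ (k + 1) ≤ 2 * A * δ k - c k * (δ k) ^ 2 := by
      rcases le_or_gt (A' k) (δ k) with hcase | hcase
      · have h := part1 k hcase
        nlinarith [mul_le_mul_of_nonneg_left h (by linarith : (0:ℝ) ≤ 2 * A),
          mul_nonneg (mul_nonneg hck hδk) (by linarith : (0:ℝ) ≤ A - δ k)]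
      · have hA'pos := (hA' k).1
        have hA'le := (hA' k).2
        have hlam : δ k / A' k ∈ Set.Icc (0 : ℝ) 1 := by
          constructor
          · positivity
          · rw [div_le_one hA'pos]; linarith
        have h := hrec k (δ k / A' k) hlam
        have h2 : δ (k + 1) ≤ δ k - c k * (δ k) ^ 2 / (2 * A' k) := by
          have : δ k + c k * (-(δ k / A' k * δ k) + A' k / 2 * (δ k / A' k) ^ 2)
              = δ k - c k * (δ k) ^ 2 / (2 * A' k) := by
            field_simp; ring
          linarith [h, this.symm.le]
        have h3 : c k * (δ k) ^ 2 / (2 * A) ≤ c k * (δ k) ^ 2 / (2 * A' k) := by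
          apply div_le_div_of_nonneg_left (by positivity) (by linarith) (by linarith)
        have h4 : δ (k + 1) ≤ δ k - c k * (δ k) ^ 2 / (2 * A) := by linarith
        have h5 : 2 * A * (δ k - c k * (δ k) ^ 2 / (2 * A))
            = 2 * A * δ k - c k * (δ k) ^ 2 := by field_simp
        nlinarith
    rw [le_div_iff₀ (by linarith)]
    have hh : 0 ≤ 2 * A - δ k * (s + 2) := by linarith
    nlinarith [sq_nonneg (2 * c k * δ k - (2 * A - δ k * (s + 2))),
      mul_nonneg hh (by nlinarith [mul_nonneg hδk (show (0:ℝ) ≤ s + 2 by linarith)] : (0:ℝ) ≤ 6 * A + δ k * (s + 2)),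
      mul_nonneg (mul_nonneg hck hδk) hδk,
      mul_nonneg hδk1 (by linarith : (0:ℝ) ≤ s + c k + 2)]
end

section
/- Let f : ℝⁿ → ℝ be convex and differentiable with L-Lipschitz gradient, ψ : ℝⁿ → ℝ ∪ {+∞} convex, proper, and closed, F = f + ψ, with nonempty solution set Ω and optimal value F*. Suppose R₀ := sup{ dist(x, Ω) : F(x) ≤ F(x⁰) } < ∞, and let M > 0, γ ∈ (0,1), η ∈ [0,1). Consider sequences x^{k+1} = x^k + α_k d^k with α_k ∈ (0,1], symmetric positive semidefinite matrices H_k with ‖H_k‖ ≤ M, where for each k the direction d^k satisfies Q_k(d^k) ≤ (1 − η)Q_k* for the model Q_k at x^k with matrix H_k, and the Armijo condition F(x^{k+1}) ≤ F(x^k) + α_kγΔ_k holds with Δ_k = ∇f(x^k)ᵀd^k + ψ(x^k + d^k) − ψ(x^k). If k₀ is an index with F(x^{k₀}) − F* < M R₀², then for all k ≥ k₀, F(x^k) − F* ≤ 2M R₀² / (γ(1 − η) Σ_{t=k₀}^{k−1} α_t + 2). -/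
/-
Setting: minimize F = f + ψ over ℝⁿ (modeled as `EuclideanSpace ℝ (Fin n)`), where
f : ℝⁿ → ℝ is smooth and ψ : ℝⁿ → ℝ ∪ {+∞} (modeled as `EReal`-valued, never ⊥)
is convex, proper and closed.  The quadratic model at x with symmetric operator H is
Q(d) = ⟪∇f(x), d⟫ + (1/2)⟪H d, d⟫ + ψ(x+d) − ψ(x), and Δ(d) = ⟪∇f(x), d⟫ + ψ(x+d) − ψ(x).
-/

open scoped RealInnerProductSpace
open Set Filter Topology

noncomputable section

/-!
Convexity of `f` and `ψ` bounds the model along the segment from `x` towards a nearest solution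
`y`: `Q(t (y - x)) ≤ -t (F(x) - F*) + t² M ‖y - x‖² / 2`, and `‖y - x‖ ≤ R₀` because the iterates
never increase `F` (`Q(0) ≤ 0`). The choice `t = (F(x) - F*) / (M R₀²)`, admissible while
`F(x) - F* ≤ M R₀²`, gives `Q* ≤ -(F(x) - F*)² / (2 M R₀²)`, so the inexactness and Armijo
conditions yield `e_{k+1} ≤ e_k - γ (1 - η) α_k e_k² / (2 M R₀²)` for `e_k = F(x^k) - F*`.
This recursion gives `1 / e_{k+1} ≥ 1 / e_k + γ (1 - η) α_k / (2 M R₀²)`, whence the rate.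
-/

theorem ConvexOn.fderiv_sub_le {E : Type*} [NormedAddCommGroup E] [NormedSpace ℝ E] {f : E → ℝ}
    (hconv : ConvexOn ℝ univ f) {x : E} (hf : DifferentiableAt ℝ f x) (y : E) :
    fderiv ℝ f x (y - x) ≤ f y - f x := by
  have hline : HasDerivAt (fun t : ℝ => f (AffineMap.lineMap x y t)) (fderiv ℝ f x (y - x)) 0 := by
    have hfx : HasFDerivAt f (fderiv ℝ f x) (AffineMap.lineMap x y (0 : ℝ)) := by
      simpa using hf.hasFDerivAt
    exact hfx.comp_hasDerivAt 0 AffineMap.hasDerivAt_lineMap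
  have := (hconv.comp_affineMap (AffineMap.lineMap x y)).le_slope_of_hasDerivAt
    (mem_univ 0) (mem_univ 1) one_pos hline
  simpa [slope_def_field] using this

theorem ConvexOn.inner_gradient_sub_le {E : Type*} [NormedAddCommGroup E] [InnerProductSpace ℝ E]
    [CompleteSpace E] {f : E → ℝ} (hconv : ConvexOn ℝ univ f) {x : E} (hf : DifferentiableAt ℝ f x)
    (y : E) : ⟪gradient f x, y - x⟫ ≤ f y - f x := by
  simpa using hconv.fderiv_sub_le hf y

section CompositeModel

variable {n : ℕ} {f : EuclideanSpace ℝ (Fin n) → ℝ} {ψ : EuclideanSpace ℝ (Fin n) → EReal}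
  {H : EuclideanSpace ℝ (Fin n) →L[ℝ] EuclideanSpace ℝ (Fin n)} {x y d : EuclideanSpace ℝ (Fin n)}

theorem Fm_ne_bot (hψ : ∀ x, ψ x ≠ ⊥) : Fm f ψ x ≠ ⊥ := by
  simp [Fm, EReal.add_eq_bot_iff, hψ x]

theorem psi_eq_of_Fm_eq {a : ℝ} (hx : Fm f ψ x = a) : ψ x = ((a - f x : ℝ) : EReal) := by
  rw [EReal.coe_sub, ← hx, Fm, EReal.add_sub_cancel_left]

theorem lowerSemicontinuous_Fm (hf : Continuous f) (hψ : ClosedPsi ψ) :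
    LowerSemicontinuous (Fm f ψ) :=
  (continuous_coe_real_ereal.comp hf).lowerSemicontinuous.add' hψ fun _ =>
    EReal.continuousAt_add (Or.inl (EReal.coe_ne_top _)) (Or.inl (EReal.coe_ne_bot _))

theorem isClosed_solSet (hf : Continuous f) (hψ : ClosedPsi ψ) : IsClosed (SolSet f ψ) := by
  have : SolSet f ψ = ⋂ z, Fm f ψ ⁻¹' Iic (Fm f ψ z) := by ext; simp [SolSet]
  rw [this]
  exact isClosed_iInter fun z => (lowerSemicontinuous_Fm hf hψ).isClosed_preimage _

theorem Dm_le_Qm (hd : 0 ≤ ⟪H d, d⟫) : Dm f ψ x d ≤ Qm f ψ H x d := by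
  refine EReal.sub_le_sub (add_le_add_left ?_ _) le_rfl
  exact EReal.coe_le_coe_iff.2 (by linarith)

theorem iInf_Qm_nonpos : ⨅ e, Qm f ψ H x e ≤ 0 :=
  (iInf_le _ 0).trans (by simpa [Qm] using EReal.sub_self_le_zero)

theorem Fm_le_of_armijo {x' : EuclideanSpace ℝ (Fin n)} {s η r : ℝ} (hs : 0 ≤ s) (hη : η ≤ 1)
    (hd : 0 ≤ ⟪H d, d⟫) (happrox : Qm f ψ H x d ≤ ((1 - η : ℝ) : EReal) * ⨅ e, Qm f ψ H x e)
    (hr : ⨅ e, Qm f ψ H x e ≤ r) (harmijo : Fm f ψ x' ≤ Fm f ψ x + (s : EReal) * Dm f ψ x d) :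
    Fm f ψ x' ≤ Fm f ψ x + ((s * ((1 - η) * r) : ℝ) : EReal) := by
  have hD : Dm f ψ x d ≤ (((1 - η) * r : ℝ) : EReal) := by
    refine (Dm_le_Qm hd).trans (happrox.trans ?_)
    rw [EReal.coe_mul]
    exact mul_le_mul_of_nonneg_left hr (EReal.coe_nonneg.2 (by linarith))
  refine harmijo.trans (add_le_add_right ?_ _)
  rw [EReal.coe_mul s]
  exact mul_le_mul_of_nonneg_left hD (EReal.coe_nonneg.2 hs)

theorem Qm_smul_sub_le (hf : Differentiable ℝ f) (hfconv : ConvexOn ℝ univ f) (hψ : ConvexE ψ)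
    {M a b t : ℝ} (hH : ‖H‖ ≤ M) (hx : Fm f ψ x = a) (hy : Fm f ψ y = b) (ht₀ : 0 ≤ t)
    (ht₁ : t ≤ 1) :
    Qm f ψ H x (t • (y - x)) ≤ ((t * (b - a) + t ^ 2 / 2 * (M * ‖y - x‖ ^ 2) : ℝ) : EReal) := by
  set d := t • (y - x)
  have hlin : ⟪gradient f x, d⟫ ≤ t * (f y - f x) := by
    rw [real_inner_smul_right]
    exact mul_le_mul_of_nonneg_left (hfconv.inner_gradient_sub_le (hf x) y) ht₀
  have hquad : ⟪H d, d⟫ ≤ t ^ 2 * (M * ‖y - x‖ ^ 2) :=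
    calc ⟪H d, d⟫ ≤ ‖H d‖ * ‖d‖ := real_inner_le_norm _ _
      _ ≤ M * ‖d‖ * ‖d‖ := by gcongr; exact H.le_of_opNorm_le hH d
      _ = t ^ 2 * (M * ‖y - x‖ ^ 2) := by
        rw [norm_smul, Real.norm_of_nonneg ht₀]; ring
  have hψd : ψ (x + d) ≤ (((1 - t) * (a - f x) + t * (b - f y) : ℝ) : EReal) := by
    have hxd : x + d = (1 - t) • x + t • y := by module
    have := hψ x y (1 - t) t (by linarith) ht₀ (by ring)
    rwa [← hxd, psi_eq_of_Fm_eq hx, psi_eq_of_Fm_eq hy, ← EReal.coe_mul, ← EReal.coe_mul,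
      ← EReal.coe_add] at this
  rw [Qm, psi_eq_of_Fm_eq hx]
  calc _ ≤ ((⟪gradient f x, d⟫ + 1 / 2 * ⟪H d, d⟫ : ℝ) : EReal)
        + (((1 - t) * (a - f x) + t * (b - f y) : ℝ) : EReal) - ((a - f x : ℝ) : EReal) :=
      EReal.sub_le_sub (add_le_add_right hψd _) le_rfl
    _ ≤ _ := by
      rw [← EReal.coe_add, ← EReal.coe_sub, EReal.coe_le_coe_iff]
      linarith

theorem iInf_Qm_le_neg_sq (hf : Differentiable ℝ f) (hfconv : ConvexOn ℝ univ f) (hψ : ConvexE ψ)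
    {M R a b : ℝ} (hH : ‖H‖ ≤ M) (hx : Fm f ψ x = a) (hy : Fm f ψ y = b) (hyx : ‖y - x‖ ≤ R)
    (hab : 0 ≤ a - b) (habR : a - b ≤ M * R ^ 2) (hMR : 0 < M * R ^ 2) :
    ⨅ e, Qm f ψ H x e ≤ ((-(a - b) ^ 2 / (2 * (M * R ^ 2)) : ℝ) : EReal) := by
  set t := (a - b) / (M * R ^ 2)
  have ht₀ : 0 ≤ t := div_nonneg hab hMR.le
  have ht₁ : t ≤ 1 := (div_le_one hMR).2 habR
  have hM : 0 ≤ M := (pos_of_mul_pos_left hMR (sq_nonneg R)).le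
  refine (iInf_le _ _).trans ((Qm_smul_sub_le hf hfconv hψ hH hx hy ht₀ ht₁).trans ?_)
  rw [EReal.coe_le_coe_iff]
  calc t * (b - a) + t ^ 2 / 2 * (M * ‖y - x‖ ^ 2)
      ≤ t * (b - a) + t ^ 2 / 2 * (M * R ^ 2) := by gcongr
    _ = -(a - b) ^ 2 / (2 * (M * R ^ 2)) := by
      have htR : t * (M * R ^ 2) = a - b := div_mul_cancel₀ _ hMR.ne'
      rw [eq_div_iff (by positivity)]
      linear_combination (t * (M * R ^ 2) - (a - b)) * htR

theorem Fm_le_sub_sq_of_armijo (hf : Differentiable ℝ f) (hfconv : ConvexOn ℝ univ f)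
    (hψ : ConvexE ψ) {x' : EuclideanSpace ℝ (Fin n)} {M R a b s η : ℝ} (hs : 0 ≤ s) (hη : η ≤ 1)
    (hd : 0 ≤ ⟪H d, d⟫) (hH : ‖H‖ ≤ M)
    (happrox : Qm f ψ H x d ≤ ((1 - η : ℝ) : EReal) * ⨅ e, Qm f ψ H x e)
    (harmijo : Fm f ψ x' ≤ Fm f ψ x + (s : EReal) * Dm f ψ x d)
    (hx : Fm f ψ x = a) (hy : Fm f ψ y = b) (hyx : ‖y - x‖ ≤ R) (hab : 0 ≤ a - b)
    (habR : a - b ≤ M * R ^ 2) (hMR : 0 < M * R ^ 2) :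
    Fm f ψ x' ≤ ((a - s * (1 - η) * (a - b) ^ 2 / (2 * (M * R ^ 2)) : ℝ) : EReal) := by
  have := Fm_le_of_armijo hs hη hd happrox
    (iInf_Qm_le_neg_sq hf hfconv hψ hH hx hy hyx hab habR hMR) harmijo
  rw [hx, ← EReal.coe_add] at this
  exact this.trans_eq (by ring_nf)

end CompositeModel

theorem sub_mul_sq_div_le_div_add {N c D δ : ℝ} (hN : 0 < N) (hc : 0 ≤ c) (hD : 0 < D)
    (hδ : δ ≤ N / D) : δ - c * δ ^ 2 / N ≤ N / (D + c) := by
  rw [le_div_iff₀ hD] at hδ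
  -- `N² - (δN - cδ²)(D + c) = (N - δD)(N - cδ) + (cδ)² = N² + δ(D + c)(cδ - N)`
  have key : (δ * N - c * δ ^ 2) * (D + c) ≤ N * N := by
    rcases le_or_gt (c * δ) N with hcδ | hcδ
    · nlinarith [mul_nonneg (sub_nonneg.2 hδ) (sub_nonneg.2 hcδ), sq_nonneg (c * δ)]
    · have hδ₀ : 0 < δ := pos_of_mul_pos_right (hN.trans hcδ) hc
      nlinarith [mul_pos (mul_pos hδ₀ (add_pos_of_pos_of_nonneg hD hc)) (sub_pos.2 hcδ)]
  have hquot : δ - c * δ ^ 2 / N = (δ * N - c * δ ^ 2) / N := by field_simp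
  rw [le_div_iff₀ (by positivity), hquot, div_mul_eq_mul_div, div_le_iff₀ hN]
  exact key

theorem le_div_sum_add_two_of_sq_decrease {N a : ℝ} {e α : ℕ → ℝ} {k₀ : ℕ} (hN : 0 < N)
    (ha : 0 ≤ a) (hα : ∀ k, 0 ≤ α k) (h₀ : e k₀ ≤ N / 2)
    (hstep : ∀ k, k₀ ≤ k → e k ≤ N / 2 → e (k + 1) ≤ e k - a * α k * e k ^ 2 / N) :
    ∀ k, k₀ ≤ k → e k ≤ N / (a * ∑ t ∈ Finset.Ico k₀ k, α t + 2) := by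
  intro k hk
  induction k, hk using Nat.le_induction with
  | base => simpa using h₀
  | succ k hk ih =>
    have hS : 0 ≤ a * ∑ t ∈ Finset.Ico k₀ k, α t :=
      mul_nonneg ha (Finset.sum_nonneg fun t _ => hα t)
    have hhalf : e k ≤ N / 2 := ih.trans (div_le_div_of_nonneg_left hN.le two_pos (by linarith))
    calc e (k + 1) ≤ e k - a * α k * e k ^ 2 / N := hstep k hk hhalf
      _ ≤ N / (a * ∑ t ∈ Finset.Ico k₀ k, α t + 2 + a * α k) :=
        sub_mul_sq_div_le_div_add hN (mul_nonneg ha (hα k)) (by linarith) ih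
      _ = N / (a * ∑ t ∈ Finset.Ico k₀ (k + 1), α t + 2) := by
        rw [Finset.sum_Ico_succ_top hk]; ring

theorem antitone_Fm_of_armijo {n : ℕ} {f : EuclideanSpace ℝ (Fin n) → ℝ}
    {ψ : EuclideanSpace ℝ (Fin n) → EReal} {x d : ℕ → EuclideanSpace ℝ (Fin n)}
    {H : ℕ → EuclideanSpace ℝ (Fin n) →L[ℝ] EuclideanSpace ℝ (Fin n)} {s : ℕ → ℝ} {η : ℝ}
    (hs : ∀ k, 0 ≤ s k) (hη : η ≤ 1) (hd : ∀ k, 0 ≤ ⟪H k (d k), d k⟫)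
    (happrox : ∀ k, Qm f ψ (H k) (x k) (d k) ≤ ((1 - η : ℝ) : EReal) * ⨅ e, Qm f ψ (H k) (x k) e)
    (harmijo : ∀ k, Fm f ψ (x (k + 1)) ≤ Fm f ψ (x k) + (s k : EReal) * Dm f ψ (x k) (d k)) :
    Antitone fun k => Fm f ψ (x k) :=
  antitone_nat_of_succ_le fun k => by
    simpa using Fm_le_of_armijo (r := 0) (hs k) hη (hd k) (happrox k)
      (by simpa using iInf_Qm_nonpos) (harmijo k)

theorem exists_mem_solSet_norm_sub_le {n : ℕ} {f : EuclideanSpace ℝ (Fin n) → ℝ}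
    {ψ : EuclideanSpace ℝ (Fin n) → EReal} {x₀ x : EuclideanSpace ℝ (Fin n)} {R₀ : ℝ}
    (hf : Continuous f) (hψ : ClosedPsi ψ) (hΩ : (SolSet f ψ).Nonempty)
    (hR₀ : IsLUB {r : ℝ | ∃ y, Fm f ψ y ≤ Fm f ψ x₀ ∧ r = Metric.infDist y (SolSet f ψ)} R₀)
    (hx : Fm f ψ x ≤ Fm f ψ x₀) : ∃ y ∈ SolSet f ψ, ‖y - x‖ ≤ R₀ := by
  obtain ⟨y, hy, hdist⟩ := (isClosed_solSet hf hψ).exists_infDist_eq_dist hΩ x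
  refine ⟨y, hy, ?_⟩
  rw [← dist_eq_norm, dist_comm, ← hdist]
  exact hR₀.1 ⟨x, hx, rfl⟩

theorem sublinear_rate_convex_general {n : ℕ}
    (f : EuclideanSpace ℝ (Fin n) → ℝ) (ψ : EuclideanSpace ℝ (Fin n) → EReal)
    (L M γ η R₀ Fstar : ℝ)
    (xseq dseq : ℕ → EuclideanSpace ℝ (Fin n)) (α : ℕ → ℝ)
    (H : ℕ → (EuclideanSpace ℝ (Fin n) →L[ℝ] EuclideanSpace ℝ (Fin n)))
    (hf : Differentiable ℝ f) (hfconv : ConvexOn ℝ Set.univ f)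
    (hψconv : ConvexE ψ) (hψproper : ProperPsi ψ) (hψclosed : ClosedPsi ψ)
    (hΩ : (SolSet f ψ).Nonempty)
    (hFstar : ∀ y ∈ SolSet f ψ, Fm f ψ y = (Fstar : EReal))
    (hγ0 : 0 < γ) (hη1 : η < 1)
    (hR0 : IsLUB {r : ℝ | ∃ y, Fm f ψ y ≤ Fm f ψ (xseq 0) ∧
        r = Metric.infDist y (SolSet f ψ)} R₀)
    (hα : ∀ k, α k ∈ Set.Ioc (0 : ℝ) 1)
    (hHpsd : ∀ k, ∀ e : EuclideanSpace ℝ (Fin n), 0 ≤ ⟪(H k) e, e⟫)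
    (hHM : ∀ k, ‖H k‖ ≤ M)
    (happrox : ∀ k, Qm f ψ (H k) (xseq k) (dseq k) ≤
        ((1 - η : ℝ) : EReal) * ⨅ e, Qm f ψ (H k) (xseq k) e)
    (harmijo : ∀ k, Fm f ψ (xseq (k + 1)) ≤
        Fm f ψ (xseq k) + ((α k * γ : ℝ) : EReal) * Dm f ψ (xseq k) (dseq k))
    (k₀ : ℕ)
    (hk₀ : Fm f ψ (xseq k₀) - (Fstar : EReal) < ((M * R₀ ^ 2 : ℝ) : EReal)) :
    ∀ k, k₀ ≤ k →
      Fm f ψ (xseq k) - (Fstar : EReal) ≤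
        ((2 * M * R₀ ^ 2 / (γ * (1 - η) * (∑ t ∈ Finset.Ico k₀ k, α t) + 2) : ℝ) : EReal) := by
  obtain ⟨y₀, hy₀⟩ := hΩ
  have hs : ∀ k, 0 ≤ α k * γ := fun k => mul_nonneg (hα k).1.le hγ0.le
  have hanti := antitone_Fm_of_armijo hs hη1.le (fun k => hHpsd k _) happrox harmijo
  set e : ℕ → ℝ := fun k => (Fm f ψ (xseq k)).toReal - Fstar
  have hFe : ∀ k, k₀ ≤ k → Fm f ψ (xseq k) = ((e k + Fstar : ℝ) : EReal) := fun k hk => by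
    have hfin := ne_top_of_le_ne_top (fun h => by simp [h] at hk₀) (hanti hk)
    simpa [e] using (EReal.coe_toReal hfin (Fm_ne_bot hψproper.1)).symm
  have he₀ : ∀ k, k₀ ≤ k → 0 ≤ e k := fun k hk => by
    have := hy₀ (xseq k)
    rw [hFstar y₀ hy₀, hFe k hk, EReal.coe_le_coe_iff] at this
    linarith
  have hek₀ : e k₀ < M * R₀ ^ 2 := by
    rwa [hFe k₀ le_rfl, ← EReal.coe_sub, EReal.coe_lt_coe_iff, add_sub_cancel_right] at hk₀
  have hMR : 0 < M * R₀ ^ 2 := (he₀ k₀ le_rfl).trans_lt hek₀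
  have hstep : ∀ k, k₀ ≤ k → e k ≤ 2 * (M * R₀ ^ 2) / 2 →
      e (k + 1) ≤ e k - γ * (1 - η) * α k * e k ^ 2 / (2 * (M * R₀ ^ 2)) := by
    intro k hk hek
    obtain ⟨y, hy, hyx⟩ :=
      exists_mem_solSet_norm_sub_le hf.continuous hψclosed ⟨y₀, hy₀⟩ hR0 (hanti (Nat.zero_le k))
    have hdesc := Fm_le_sub_sq_of_armijo hf hfconv hψconv (hs k) hη1.le (hHpsd k _) (hHM k)
      (happrox k) (harmijo k) (hFe k hk) (hFstar y hy) hyx (by simpa using he₀ k hk) (by linarith)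
      hMR
    rw [hFe (k + 1) (hk.trans k.le_succ), EReal.coe_le_coe_iff, add_sub_cancel_right] at hdesc
    linear_combination hdesc
  have hrate := le_div_sum_add_two_of_sq_decrease (by positivity)
    (mul_nonneg hγ0.le (sub_nonneg.2 hη1.le)) (fun k => (hα k).1.le) (by linarith) hstep
  intro k hk
  rw [hFe k hk, ← EReal.coe_sub, add_sub_cancel_right, EReal.coe_le_coe_iff, mul_assoc 2]
  exact hrate k hk

/-- Sublinear rate for convex F.  With f convex, ∇f L-Lipschitz, nonempty
solution set Ω with optimal value F*, R₀ = sup{dist(x,Ω) : F(x) ≤ F(x⁰)} finite,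
‖H_k‖ ≤ M, iterates x^{k+1} = x^k + α_k d^k with α_k ∈ (0,1], η-approximate directions
d^k and Armijo decrease at every iteration: if F(x^{k₀}) − F* < M R₀², then for all
k ≥ k₀, F(x^k) − F* ≤ 2M R₀² / (γ(1 − η) Σ_{t=k₀}^{k−1} α_t + 2). -/
theorem sublinear_rate_convex {n : ℕ}
    (f : EuclideanSpace ℝ (Fin n) → ℝ) (ψ : EuclideanSpace ℝ (Fin n) → EReal)
    (L M γ η R₀ Fstar : ℝ)
    (xseq dseq : ℕ → EuclideanSpace ℝ (Fin n)) (α : ℕ → ℝ)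
    (H : ℕ → (EuclideanSpace ℝ (Fin n) →L[ℝ] EuclideanSpace ℝ (Fin n)))
    (hf : Differentiable ℝ f) (hfconv : ConvexOn ℝ Set.univ f)
    (hL : 0 < L) (hlip : ∀ y z, ‖gradient f y - gradient f z‖ ≤ L * ‖y - z‖)
    (hψconv : ConvexE ψ) (hψproper : ProperPsi ψ) (hψclosed : ClosedPsi ψ)
    (hΩ : (SolSet f ψ).Nonempty)
    (hFstar : ∀ y ∈ SolSet f ψ, Fm f ψ y = (Fstar : EReal))
    (hM : 0 < M) (hγ0 : 0 < γ) (hγ1 : γ < 1) (hη0 : 0 ≤ η) (hη1 : η < 1)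
    (hR0 : IsLUB {r : ℝ | ∃ y, Fm f ψ y ≤ Fm f ψ (xseq 0) ∧
        r = Metric.infDist y (SolSet f ψ)} R₀)
    (hstep : ∀ k, xseq (k + 1) = xseq k + α k • dseq k)
    (hα : ∀ k, α k ∈ Set.Ioc (0 : ℝ) 1)
    (hHsymm : ∀ k, SymmCLM (H k))
    (hHpsd : ∀ k, ∀ e : EuclideanSpace ℝ (Fin n), 0 ≤ ⟪(H k) e, e⟫)
    (hHM : ∀ k, ‖H k‖ ≤ M)
    (happrox : ∀ k, Qm f ψ (H k) (xseq k) (dseq k) ≤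
        ((1 - η : ℝ) : EReal) * ⨅ e, Qm f ψ (H k) (xseq k) e)
    (harmijo : ∀ k, Fm f ψ (xseq (k + 1)) ≤
        Fm f ψ (xseq k) + ((α k * γ : ℝ) : EReal) * Dm f ψ (xseq k) (dseq k))
    (k₀ : ℕ)
    (hk₀ : Fm f ψ (xseq k₀) - (Fstar : EReal) < ((M * R₀ ^ 2 : ℝ) : EReal)) :
    ∀ k, k₀ ≤ k →
      Fm f ψ (xseq k) - (Fstar : EReal) ≤
        ((2 * M * R₀ ^ 2 / (γ * (1 - η) * (∑ t ∈ Finset.Ico k₀ k, α t) + 2) : ℝ) : EReal) :=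
  sublinear_rate_convex_general f ψ L M γ η R₀ Fstar xseq dseq α H hf hfconv hψconv hψproper
    hψclosed hΩ hFstar hγ0 hη1 hR0 hα hHpsd hHM happrox harmijo k₀ hk₀
end
end
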